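/- arXiv:1303.2344 — 4 statements merged into one kernel-verified Lean document; each statement's English description precedes it below -/
import Mathlib

section
/- Let s ∈ [0,2), M, R > 0, and suppose y ∈ C^∞([t₁,t₂]) satisfies |y^(i)(t)| ≤ M (i!)^s / R^i for all i ≥ 0 and t ∈ [t₁,t₂]. Then the series u(t) = ∑_{i≥1} y^(i)(t)/(2i-1)! converges uniformly on [t₁,t₂] and there exist constants C, R₁ > 0 such that |u^(m)(t)| ≤ C (m!)^s / R₁^m for all m ≥ 0 and t ∈ [t₁,t₂] (i.e. u is Gevrey of order s). -/
open Set Filter Topology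

private lemma factAux (a b : ℕ) :
    ((a + b).factorial : ℝ) ≤ 2 ^ (a + b) * (a.factorial * b.factorial) := by
  have h1 : (a + b).choose a ≤ 2 ^ (a + b) := by
    calc (a + b).choose a ≤ ∑ i ∈ Finset.range (a + b + 1), (a + b).choose i :=
          Finset.single_le_sum (fun i _ => Nat.zero_le _)
            (Finset.mem_range.mpr (by omega))
      _ = 2 ^ (a + b) := Nat.sum_range_choose (a + b)
  have h2 : (a + b).factorial = (a + b).choose b * a.factorial * b.factorial := by
    rw [Nat.add_choose_mul_factorial_mul_factorial]
  have h1' : (a + b).choose b ≤ 2 ^ (a + b) := by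
    calc (a + b).choose b ≤ ∑ i ∈ Finset.range (a + b + 1), (a + b).choose i :=
          Finset.single_le_sum (fun i _ => Nat.zero_le _)
            (Finset.mem_range.mpr (by omega))
      _ = 2 ^ (a + b) := Nat.sum_range_choose (a + b)
  have : (a + b).factorial ≤ 2 ^ (a + b) * (a.factorial * b.factorial) := by
    rw [h2, mul_assoc]
    exact Nat.mul_le_mul_right _ h1'
  exact_mod_cast this

theorem control_series_uniform_and_gevrey (s t₁ t₂ M R : ℝ) (hs0 : 0 ≤ s) (hs2 : s < 2)
    (ht : t₁ < t₂) (hM : 0 < M) (hR : 0 < R) (y : ℝ → ℝ) (hy : ContDiff ℝ (⊤ : ℕ∞) y)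
    (hb : ∀ i : ℕ, ∀ t ∈ Set.Icc t₁ t₂,
      |iteratedDeriv i y t| ≤ M * (i.factorial : ℝ) ^ s / R ^ i) :
    TendstoUniformlyOn
      (fun N t => ∑ i ∈ Finset.range N, iteratedDeriv (i + 1) y t / ((2 * i + 1).factorial : ℝ))
      (fun t => ∑' i : ℕ, iteratedDeriv (i + 1) y t / ((2 * i + 1).factorial : ℝ))
      Filter.atTop (Set.Icc t₁ t₂) ∧
    ∃ C R₁ : ℝ, 0 < C ∧ 0 < R₁ ∧ ∀ m : ℕ, ∀ t ∈ Set.Icc t₁ t₂,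
      |iteratedDeriv m
          (fun t => ∑' i : ℕ, iteratedDeriv (i + 1) y t / ((2 * i + 1).factorial : ℝ)) t|
        ≤ C * (m.factorial : ℝ) ^ s / R₁ ^ m := by
  have h2s : (0:ℝ) < (2:ℝ) ^ s := Real.rpow_pos_of_pos (by norm_num) s
  set q : ℝ := (2:ℝ) ^ s / R with hqdef
  have hq : 0 < q := div_pos h2s hR
  set w : ℕ → ℝ := fun i => q ^ (i + 1) * (((i + 1).factorial : ℝ)) ^ s /
    (((2 * i + 1).factorial : ℝ)) with hwdef
  have hfacpos : ∀ k : ℕ, (0:ℝ) < (k.factorial : ℝ) := fun k =>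
    Nat.cast_pos.mpr k.factorial_pos
  have hwpos : ∀ i, 0 < w i := by
    intro i
    have h1 := hfacpos ((i + 1))
    have h2 := hfacpos ((2 * i + 1))
    simp only [hwdef]
    positivity
  -- summability of w
  have hw : Summable w := by
    apply summable_of_ratio_norm_eventually_le (r := 1/2) (by norm_num)
    have htend : Tendsto (fun n : ℕ => q * ((n:ℝ) + 2) ^ (s - 2)) atTop (𝓝 0) := by
      have h1 : Tendsto (fun x : ℝ => x ^ (-(2 - s))) atTop (𝓝 0) :=
        tendsto_rpow_neg_atTop (by linarith)
      have h2 : Tendsto (fun n : ℕ => (n:ℝ) + 2) atTop atTop :=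
        tendsto_atTop_add_const_right _ _ tendsto_natCast_atTop_atTop
      have h3 : Tendsto (fun n : ℕ => ((n:ℝ) + 2) ^ (s - 2)) atTop (𝓝 0) := by
        have := h1.comp h2
        simpa [neg_sub, Function.comp_def] using this
      simpa using h3.const_mul q
    have hev : ∀ᶠ n : ℕ in atTop, q * ((n:ℝ) + 2) ^ (s - 2) ≤ 1/2 :=
      htend.eventually (eventually_le_nhds (by norm_num))
    filter_upwards [hev] with n hn
    have hnpos : (0:ℝ) < (n:ℝ) + 2 := by positivity
    have hfac1 : (((n + 2).factorial : ℕ) : ℝ) ^ s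
        = ((n:ℝ) + 2) ^ s * (((n + 1).factorial : ℝ)) ^ s := by
      rw [show (n + 2).factorial = (n + 2) * (n + 1).factorial from rfl]
      push_cast
      rw [Real.mul_rpow (by positivity) (by positivity)]
    have hfac2 : (((2 * (n + 1) + 1).factorial : ℕ) : ℝ)
        = ((2 * (n:ℝ) + 3) * (2 * (n:ℝ) + 2)) * (((2 * n + 1).factorial : ℝ)) := by
      rw [show 2 * (n + 1) + 1 = (2 * n + 1) + 1 + 1 by ring, Nat.factorial_succ,
        Nat.factorial_succ]
      push_cast
      ring
    have hrec : w (n + 1) = w n * (q * ((n:ℝ) + 2) ^ s /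
        ((2 * (n:ℝ) + 3) * (2 * (n:ℝ) + 2))) := by
      simp only [hwdef]
      rw [show n + 1 + 1 = n + 2 from rfl, hfac1, hfac2, pow_succ]
      have h1 : ((2 * n + 1).factorial : ℝ) ≠ 0 := (hfacpos _).ne'
      have h2 : (2 * (n:ℝ) + 3) ≠ 0 := by positivity
      have h3 : (2 * (n:ℝ) + 2) ≠ 0 := by positivity
      field_simp
    have hsplit : ((n:ℝ) + 2) ^ s = ((n:ℝ) + 2) ^ (s - 2) * ((n:ℝ) + 2) ^ (2:ℕ) := by
      rw [← Real.rpow_natCast ((n:ℝ) + 2) 2, ← Real.rpow_add hnpos]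
      norm_num
    have hratio : q * ((n:ℝ) + 2) ^ s / ((2 * (n:ℝ) + 3) * (2 * (n:ℝ) + 2)) ≤ 1/2 := by
      have hD : (0:ℝ) < (2 * (n:ℝ) + 3) * (2 * (n:ℝ) + 2) := by positivity
      rw [div_le_iff₀ hD]
      calc q * ((n:ℝ) + 2) ^ s = (q * ((n:ℝ) + 2) ^ (s - 2)) * ((n:ℝ) + 2) ^ (2:ℕ) := by
            rw [hsplit]; ring
        _ ≤ (1/2) * ((n:ℝ) + 2) ^ (2:ℕ) := by
            apply mul_le_mul_of_nonneg_right hn (by positivity)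
        _ ≤ 1/2 * ((2 * (n:ℝ) + 3) * (2 * (n:ℝ) + 2)) := by nlinarith [Nat.cast_nonneg (α := ℝ) n]
    have hnn : 0 ≤ q * ((n:ℝ) + 2) ^ s / ((2 * (n:ℝ) + 3) * (2 * (n:ℝ) + 2)) := by positivity
    rw [Real.norm_eq_abs, Real.norm_eq_abs, abs_of_pos (hwpos _), abs_of_pos (hwpos _), hrec]
    calc w n * (q * ((n:ℝ) + 2) ^ s / ((2 * (n:ℝ) + 3) * (2 * (n:ℝ) + 2)))
        ≤ w n * (1/2) := mul_le_mul_of_nonneg_left hratio (hwpos n).le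
      _ = 1/2 * w n := by ring
  set K : ℝ := ∑' i, w i with hKdef
  have hK : 0 < K := Summable.tsum_pos hw (fun i => (hwpos i).le) 0 (hwpos 0)
  -- key term bound
  have hpowrpow : ∀ k : ℕ, ((2:ℝ) ^ k) ^ s = ((2:ℝ) ^ s) ^ k := by
    intro k
    rw [← Real.rpow_natCast 2 k, ← Real.rpow_mul (by norm_num), mul_comm,
      Real.rpow_mul (by norm_num), Real.rpow_natCast]
  have hbound : ∀ m i : ℕ, ∀ t ∈ Set.Icc t₁ t₂,
      |iteratedDeriv (m + i + 1) y t| / ((2 * i + 1).factorial : ℝ)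
        ≤ M * (m.factorial : ℝ) ^ s * q ^ m * w i := by
    intro m i t htmem
    have hFpos := hfacpos (2 * i + 1)
    have h1 := hb (m + i + 1) t htmem
    have h2 : ((m + i + 1).factorial : ℝ) ^ s
        ≤ ((2:ℝ) ^ s) ^ (m + i + 1) * ((m.factorial : ℝ) ^ s * ((i + 1).factorial : ℝ) ^ s) := by
      have hnat : ((m + i + 1).factorial : ℝ)
          ≤ 2 ^ (m + i + 1) * ((m.factorial : ℝ) * ((i + 1).factorial : ℝ)) := by
        have := factAux m (i + 1)
        rw [show m + (i + 1) = m + i + 1 by ring] at this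
        convert this using 2 <;> push_cast <;> ring
      calc ((m + i + 1).factorial : ℝ) ^ s
          ≤ ((2:ℝ) ^ (m + i + 1) * ((m.factorial : ℝ) * ((i + 1).factorial : ℝ))) ^ s :=
            Real.rpow_le_rpow (by positivity) hnat hs0
        _ = ((2:ℝ) ^ s) ^ (m + i + 1) * ((m.factorial : ℝ) ^ s * ((i + 1).factorial : ℝ) ^ s) := by
            rw [Real.mul_rpow (by positivity) (by positivity),
              Real.mul_rpow (by positivity) (by positivity), hpowrpow]
    have hgoal : M * (m.factorial : ℝ) ^ s * q ^ m * w i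
        = M * (((2:ℝ) ^ s) ^ (m + i + 1) * ((m.factorial : ℝ) ^ s * ((i + 1).factorial : ℝ) ^ s))
          / R ^ (m + i + 1) / ((2 * i + 1).factorial : ℝ) := by
      simp only [hwdef, hqdef, div_pow]
      field_simp
      ring
    rw [hgoal]
    have hnum : |iteratedDeriv (m + i + 1) y t|
        ≤ M * (((2:ℝ) ^ s) ^ (m + i + 1) * ((m.factorial : ℝ) ^ s * ((i + 1).factorial : ℝ) ^ s))
          / R ^ (m + i + 1) := by
      refine h1.trans ?_
      gcongr
    gcongr
  have hnorm : ∀ (z : ℝ) (k : ℕ), ‖z / (k.factorial : ℝ)‖ = |z| / (k.factorial : ℝ) := by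
    intro z k
    rw [Real.norm_eq_abs, abs_div, abs_of_pos (hfacpos k)]
  -- summability of the term series
  have hsum : ∀ m : ℕ, ∀ t ∈ Set.Icc t₁ t₂,
      Summable (fun i : ℕ => iteratedDeriv (m + i + 1) y t / ((2 * i + 1).factorial : ℝ)) := by
    intro m t htmem
    apply Summable.of_norm_bounded (hw.mul_left (M * (m.factorial : ℝ) ^ s * q ^ m))
    intro i
    rw [hnorm]
    exact hbound m i t htmem
  set v : ℕ → ℝ → ℝ := fun m t =>
    ∑' i : ℕ, iteratedDeriv (m + i + 1) y t / ((2 * i + 1).factorial : ℝ) with hvdef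
  -- uniform convergence for each level m
  have htu : ∀ m : ℕ, TendstoUniformlyOn
      (fun N t => ∑ i ∈ Finset.range N,
        iteratedDeriv (m + i + 1) y t / ((2 * i + 1).factorial : ℝ))
      (v m) atTop (Set.Icc t₁ t₂) := by
    intro m
    simp only [hvdef]
    apply tendstoUniformlyOn_tsum_nat (hw.mul_left (M * (m.factorial : ℝ) ^ s * q ^ m))
    intro n x hx
    rw [hnorm]
    exact hbound m n x hx
  -- continuity of v m on Icc
  have hcont : ∀ m : ℕ, ContinuousOn (v m) (Set.Icc t₁ t₂) := by
    intro m
    apply (htu m).continuousOn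
    apply Filter.Frequently.of_forall
    intro N
    apply Continuous.continuousOn
    apply continuous_finset_sum
    intro i _
    exact (hy.continuous_iteratedDeriv _ (by exact_mod_cast le_top)).div_const _
  -- derivative of each term
  have hterm : ∀ (k : ℕ) (t : ℝ), HasDerivAt (iteratedDeriv k y) (iteratedDeriv (k + 1) y t) t := by
    intro k t
    rw [iteratedDeriv_succ]
    exact ((hy.differentiable_iteratedDeriv k (by
      exact_mod_cast lt_top_iff_ne_top.mpr (by simp))).differentiableAt).hasDerivAt
  -- derivative of partial sums
  have hPder : ∀ (m N : ℕ) (t : ℝ), HasDerivAt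
      (fun t => ∑ i ∈ Finset.range N, iteratedDeriv (m + i + 1) y t / ((2 * i + 1).factorial : ℝ))
      (∑ i ∈ Finset.range N,
        iteratedDeriv (m + 1 + i + 1) y t / ((2 * i + 1).factorial : ℝ)) t := by
    intro m N t
    apply HasDerivAt.fun_sum
    intro i _
    have h := (hterm (m + i + 1) t).div_const (((2 * i + 1).factorial : ℝ))
    simpa [show m + 1 + i + 1 = m + i + 1 + 1 by ring] using h
  -- interior derivative of v m
  have hvd : ∀ m : ℕ, ∀ x ∈ Set.Ioo t₁ t₂, HasDerivAt (v m) (v (m + 1) x) x := by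
    intro m x hx
    apply hasDerivAt_of_tendstoLocallyUniformlyOn isOpen_Ioo
      (((htu (m + 1)).mono Set.Ioo_subset_Icc_self).tendstoLocallyUniformlyOn)
      (Filter.Eventually.of_forall (fun N z _ => hPder m N z)) ?_ hx
    intro z hz
    exact ((hsum m z (Set.Ioo_subset_Icc_self hz)).hasSum.tendsto_sum_nat)
  -- derivative within Icc at every point of Icc
  have hvw : ∀ m : ℕ, ∀ x ∈ Set.Icc t₁ t₂,
      HasDerivWithinAt (v m) (v (m + 1) x) (Set.Icc t₁ t₂) x := by
    intro m x hx
    have fdiff : DifferentiableOn ℝ (v m) (Set.Ioo t₁ t₂) :=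
      fun z hz => ((hvd m z hz).differentiableAt).differentiableWithinAt
    rcases eq_or_ne x t₁ with rfl | hx1
    · apply HasDerivWithinAt.mono _ Set.Icc_subset_Ici_self
      apply hasDerivWithinAt_Ici_of_tendsto_deriv fdiff
        ((hcont m x hx).mono Set.Ioo_subset_Icc_self) (Ioo_mem_nhdsGT ht)
      rw [← nhdsWithin_Ioo_eq_nhdsGT ht]
      apply Filter.Tendsto.congr'
        (eventually_of_mem self_mem_nhdsWithin (fun z hz => ((hvd m z hz).deriv).symm))
      exact ((hcont (m + 1) x hx).mono Set.Ioo_subset_Icc_self)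
    rcases eq_or_ne x t₂ with rfl | hx2
    · apply HasDerivWithinAt.mono _ Set.Icc_subset_Iic_self
      apply hasDerivWithinAt_Iic_of_tendsto_deriv fdiff
        ((hcont m x hx).mono Set.Ioo_subset_Icc_self) (Ioo_mem_nhdsLT ht)
      rw [← nhdsWithin_Ioo_eq_nhdsLT ht]
      apply Filter.Tendsto.congr'
        (eventually_of_mem self_mem_nhdsWithin (fun z hz => ((hvd m z hz).deriv).symm))
      exact ((hcont (m + 1) x hx).mono Set.Ioo_subset_Icc_self)
    · have hxIoo : x ∈ Set.Ioo t₁ t₂ := ⟨hx.1.lt_of_ne (Ne.symm hx1), hx.2.lt_of_ne hx2⟩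
      exact (hvd m x hxIoo).hasDerivWithinAt
  -- bound on v m
  have hvbound : ∀ m : ℕ, ∀ t ∈ Set.Icc t₁ t₂,
      |v m t| ≤ M * (m.factorial : ℝ) ^ s * q ^ m * K := by
    intro m t htmem
    have h := tsum_of_norm_bounded
      ((hw.hasSum).mul_left (M * (m.factorial : ℝ) ^ s * q ^ m))
      (fun i => by rw [hnorm]; exact hbound m i t htmem)
    simp only [hvdef]
    rw [← Real.norm_eq_abs]
    exact h
  -- the statement's function
  set U : ℝ → ℝ := fun t => ∑' i : ℕ, iteratedDeriv (i + 1) y t / ((2 * i + 1).factorial : ℝ)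
    with hUdef
  have hU0 : ∀ x, U x = v 0 x := by
    intro x
    simp only [hUdef, hvdef, Nat.zero_add]
  -- main induction
  have key : ∀ m : ℕ, (∀ x ∈ Set.Ioo t₁ t₂, iteratedDeriv m U x = v m x) ∧
      (∀ x ∈ Set.Icc t₁ t₂, iteratedDeriv m U x = v m x ∨ iteratedDeriv m U x = 0) := by
    intro m
    induction m with
    | zero =>
      constructor
      · intro x _; rw [iteratedDeriv_zero]; exact hU0 x
      · intro x _; exact Or.inl (by rw [iteratedDeriv_zero]; exact hU0 x)
    | succ m ih =>
      have hIoo := ih.1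
      have hdiffcase : ∀ x ∈ Set.Icc t₁ t₂, DifferentiableAt ℝ (iteratedDeriv m U) x →
          deriv (iteratedDeriv m U) x = v (m + 1) x := by
        intro x hx hdf
        haveI : (𝓝[Set.Ioo t₁ t₂] x).NeBot := by
          apply mem_closure_iff_nhdsWithin_neBot.mp
          rw [closure_Ioo ht.ne]
          exact hx
        have hfx : iteratedDeriv m U x = v m x := by
          have h1 : Tendsto (v m) (𝓝[Set.Ioo t₁ t₂] x) (𝓝 (iteratedDeriv m U x)) :=
            Filter.Tendsto.congr'
              (eventually_of_mem self_mem_nhdsWithin (fun z hz => hIoo z hz))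
              (hdf.continuousAt.continuousWithinAt)
          have h2 : Tendsto (v m) (𝓝[Set.Ioo t₁ t₂] x) (𝓝 (v m x)) :=
            (hcont m x hx).mono Set.Ioo_subset_Icc_self
          exact tendsto_nhds_unique h1 h2
        have hmem : Set.Ioo t₁ t₂ ∪ {x} ∈ 𝓝[Set.Icc t₁ t₂] x := by
          rcases eq_or_ne x t₁ with rfl | hx1
          · rw [mem_nhdsWithin]
            refine ⟨Set.Iio t₂, isOpen_Iio, ht, fun z hz => ?_⟩
            rcases eq_or_lt_of_le hz.2.1 with h | h
            · exact Or.inr (by simp [← h])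
            · exact Or.inl ⟨h, hz.1⟩
          rcases eq_or_ne x t₂ with rfl | hx2
          · rw [mem_nhdsWithin]
            refine ⟨Set.Ioi t₁, isOpen_Ioi, ht, fun z hz => ?_⟩
            rcases eq_or_lt_of_le hz.2.2 with h | h
            · exact Or.inr (by simp [h])
            · exact Or.inl ⟨hz.1, h⟩
          · have hxIoo : x ∈ Set.Ioo t₁ t₂ := ⟨hx.1.lt_of_ne (Ne.symm hx1), hx.2.lt_of_ne hx2⟩
            rw [mem_nhdsWithin]
            exact ⟨Set.Ioo t₁ t₂, isOpen_Ioo, hxIoo, fun z hz => Or.inl hz.1⟩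
        have heq : v m =ᶠ[𝓝[Set.Icc t₁ t₂] x] iteratedDeriv m U := by
          apply eventually_of_mem hmem
          intro z hz
          rcases hz with hz | hz
          · exact (hIoo z hz).symm
          · rw [Set.mem_singleton_iff.mp hz]
            exact hfx.symm
        have h3 : HasDerivWithinAt (v m) (deriv (iteratedDeriv m U) x) (Set.Icc t₁ t₂) x :=
          ((hdf.hasDerivAt).hasDerivWithinAt).congr_of_eventuallyEq heq hfx.symm
        have hUD := uniqueDiffOn_Icc ht x hx
        exact (h3.derivWithin hUD).symm.trans ((hvw m x hx).derivWithin hUD)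
      constructor
      · intro x hxI
        rw [iteratedDeriv_succ]
        apply hdiffcase x (Set.Ioo_subset_Icc_self hxI)
        have heq : iteratedDeriv m U =ᶠ[𝓝 x] v m :=
          eventually_of_mem (isOpen_Ioo.mem_nhds hxI) hIoo
        exact (heq.differentiableAt_iff).mpr (hvd m x hxI).differentiableAt
      · intro x hx
        rw [iteratedDeriv_succ]
        by_cases hdf : DifferentiableAt ℝ (iteratedDeriv m U) x
        · exact Or.inl (hdiffcase x hx hdf)
        · exact Or.inr (deriv_zero_of_not_differentiableAt hdf)
  constructor
  · -- uniform convergence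
    have h := htu 0
    simp only [hvdef, Nat.zero_add] at h
    exact h
  · refine ⟨M * K, R / (2:ℝ) ^ s, by positivity, by positivity, ?_⟩
    intro m t htmem
    have hBval : M * (m.factorial : ℝ) ^ s * q ^ m * K
        = (M * K) * (m.factorial : ℝ) ^ s / (R / (2:ℝ) ^ s) ^ m := by
      simp only [hqdef, div_pow]
      field_simp
    rcases (key m).2 t htmem with h | h
    · rw [h]
      calc |v m t| ≤ M * (m.factorial : ℝ) ^ s * q ^ m * K := hvbound m t htmem
        _ = (M * K) * (m.factorial : ℝ) ^ s / (R / (2:ℝ) ^ s) ^ m := hBval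
    · rw [h, abs_zero]
      positivity
end

section
/- Let s ∈ [0,2) and y ∈ C^∞([t₁,t₂]) with |y^(i)(t)| ≤ M (i!)^s / R^i. Then θ(t,x) = ∑_{i≥0} y^(i)(t) x^(2i)/(2i)! satisfies Gevrey estimates: there exist C, R₁, R₂ > 0 with |∂_t^m ∂_x^n θ(t,x)| ≤ C (m!)^s (n!)^(s/2) / (R₁^m R₂^n) for all m,n ≥ 0 and (t,x) ∈ [t₁,t₂]×[0,1]. -/
open Set Filter Topology

lemma aux_choose_le_two_pow (n k : ℕ) : n.choose k ≤ 2 ^ n := by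
  rcases le_or_gt k n with h | h
  · calc n.choose k ≤ ∑ m ∈ Finset.range (n+1), n.choose m :=
        Finset.single_le_sum (fun i _ => Nat.zero_le _) (Finset.mem_range.2 (Nat.lt_succ_of_le h))
    _ = 2 ^ n := Nat.sum_range_choose n
  · simp [Nat.choose_eq_zero_of_lt h]

lemma aux_mul_le_of_choose {a b c d : ℕ} (hc : 0 < c) (h : c * a * b = d) : a * b ≤ d := by
  calc a * b = 1 * (a * b) := (one_mul _).symm
  _ ≤ c * (a * b) := Nat.mul_le_mul_right _ hc
  _ = d := by rw [← h]; ring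

lemma aux_rpow_two_eq {x : ℝ} : x ^ (2:ℝ) = x ^ (2:ℕ) := by
  rw [show (2:ℝ) = ((2:ℕ):ℝ) by norm_num, Real.rpow_natCast]

lemma aux_fact_bound {s : ℝ} (hs0 : 0 ≤ s) (hs2 : s < 2) {n i : ℕ} (hni : n ≤ 2*i) :
    ((i.factorial : ℝ)) ^ s * (((2*i-n).factorial : ℝ))⁻¹ ≤
      ((n:ℝ)+1) * ((n.factorial : ℝ)) ^ (s/2) * 4 ^ i
        * (((i - (n+1)/2).factorial : ℝ)) ^ (s-2) := by
  set h := (n+1)/2 with hh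
  set j := i - h with hj
  have f3 : h ≤ i := by omega
  have hn : h ≤ n := by omega
  -- Nat inequalities
  have N1 : i.factorial ≤ 2^i * (h.factorial * j.factorial) := by
    have e := Nat.choose_mul_factorial_mul_factorial f3
    calc i.factorial = i.choose h * h.factorial * (i-h).factorial := e.symm
    _ ≤ 2^i * h.factorial * j.factorial :=
        Nat.mul_le_mul (Nat.mul_le_mul_right _ (aux_choose_le_two_pow i h)) le_rfl
    _ = 2^i * (h.factorial * j.factorial) := by ring
  have N2a : h.factorial * (n-h).factorial ≤ n.factorial :=
    aux_mul_le_of_choose (Nat.choose_pos hn) (Nat.choose_mul_factorial_mul_factorial hn)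
  have N2 : h.factorial^2 ≤ (n+1) * n.factorial := by
    have hcase : h = n - h ∨ h = (n-h)+1 := by omega
    rcases hcase with hc | hc
    · have e : h.factorial^2 = h.factorial * (n-h).factorial := by rw [← hc, pow_two]
      rw [e]
      calc h.factorial * (n-h).factorial ≤ n.factorial := N2a
      _ ≤ (n+1) * n.factorial := Nat.le_mul_of_pos_left _ (by omega)
    · have e : h.factorial = h * (n-h).factorial := by rw [hc, Nat.factorial_succ, ← hc]
      calc h.factorial^2 = h * (h.factorial * (n-h).factorial) := by
            rw [pow_two]; nth_rewrite 2 [e]; ring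
      _ ≤ h * n.factorial := Nat.mul_le_mul_left _ N2a
      _ ≤ (n+1) * n.factorial := Nat.mul_le_mul_right _ (by omega)
  have N3 : j.factorial * j.factorial ≤ (2*i-n).factorial := by
    have h2j : (2*j).factorial ≤ (2*i-n).factorial := Nat.factorial_le (by omega)
    have e := Nat.choose_mul_factorial_mul_factorial (show j ≤ 2*j by omega)
    have h2 : 2*j - j = j := by omega
    rw [h2] at e
    exact le_trans (aux_mul_le_of_choose (Nat.choose_pos (by omega)) e) h2j
  -- cast to ℝ
  have R1 : ((i.factorial : ℝ)) ^ s ≤ (4:ℝ)^i * ((h.factorial:ℝ))^s * ((j.factorial:ℝ))^s := by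
    have hle : ((i.factorial : ℝ)) ≤ (2:ℝ)^i * ((h.factorial:ℝ) * (j.factorial:ℝ)) := by
      exact_mod_cast N1
    have h1 : ((i.factorial : ℝ)) ^ s ≤ ((2:ℝ)^i * ((h.factorial:ℝ) * (j.factorial:ℝ)))^s :=
      Real.rpow_le_rpow (by positivity) hle hs0
    have h2 : ((2:ℝ)^i * ((h.factorial:ℝ) * (j.factorial:ℝ)))^s
        = ((2:ℝ)^i)^s * (((h.factorial:ℝ))^s * ((j.factorial:ℝ))^s) := by
      rw [Real.mul_rpow (by positivity) (by positivity),
          Real.mul_rpow (by positivity) (by positivity)]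
    have h3 : ((2:ℝ)^i)^s ≤ (4:ℝ)^i := by
      calc ((2:ℝ)^i)^s ≤ ((2:ℝ)^i)^(2:ℝ) :=
        Real.rpow_le_rpow_of_exponent_le (one_le_pow₀ (by norm_num)) hs2.le
      _ = ((2:ℝ)^i)^(2:ℕ) := aux_rpow_two_eq
      _ = (4:ℝ)^i := by rw [← pow_mul, mul_comm i 2, pow_mul]; norm_num
    calc ((i.factorial : ℝ)) ^ s ≤ ((2:ℝ)^i)^s * (((h.factorial:ℝ))^s * ((j.factorial:ℝ))^s) := by
          rw [← h2]; exact h1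
    _ ≤ (4:ℝ)^i * (((h.factorial:ℝ))^s * ((j.factorial:ℝ))^s) := by
          apply mul_le_mul_of_nonneg_right h3; positivity
    _ = (4:ℝ)^i * ((h.factorial:ℝ))^s * ((j.factorial:ℝ))^s := by ring
  have R2 : ((h.factorial:ℝ))^s ≤ ((n:ℝ)+1) * ((n.factorial:ℝ))^(s/2) := by
    have e1 : ((h.factorial:ℝ))^s = (((h.factorial:ℝ))^(2:ℕ))^(s/2) := by
      rw [← aux_rpow_two_eq, ← Real.rpow_mul (by positivity)]
      congr 1; ring
    have e2 : (((h.factorial:ℝ))^(2:ℕ))^(s/2) ≤ ((((n:ℝ)+1)) * ((n.factorial:ℝ)))^(s/2) := by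
      apply Real.rpow_le_rpow (by positivity) ?_ (by linarith)
      exact_mod_cast N2
    have e3 : ((((n:ℝ)+1)) * ((n.factorial:ℝ)))^(s/2)
        = ((n:ℝ)+1)^(s/2) * ((n.factorial:ℝ))^(s/2) := by
      rw [Real.mul_rpow (by positivity) (by positivity)]
    have e4 : ((n:ℝ)+1)^(s/2) ≤ ((n:ℝ)+1) := by
      calc ((n:ℝ)+1)^(s/2) ≤ ((n:ℝ)+1)^(1:ℝ) :=
        Real.rpow_le_rpow_of_exponent_le (by exact_mod_cast Nat.le_add_left 1 n) (by linarith)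
      _ = (n:ℝ)+1 := Real.rpow_one _
    calc ((h.factorial:ℝ))^s = (((h.factorial:ℝ))^(2:ℕ))^(s/2) := e1
    _ ≤ ((n:ℝ)+1)^(s/2) * ((n.factorial:ℝ))^(s/2) := by rw [← e3]; exact e2
    _ ≤ ((n:ℝ)+1) * ((n.factorial:ℝ))^(s/2) := by
        apply mul_le_mul_of_nonneg_right e4; positivity
  have R3 : ((j.factorial:ℝ))^s * (((2*i-n).factorial : ℝ))⁻¹ ≤ ((j.factorial:ℝ))^(s-2) := by
    have e1 : ((j.factorial:ℝ))^s = ((j.factorial:ℝ))^(2:ℕ) * ((j.factorial:ℝ))^(s-2) := by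
      rw [← aux_rpow_two_eq, ← Real.rpow_add (by positivity)]
      congr 1; ring
    have e2 : ((j.factorial:ℝ))^(2:ℕ) * (((2*i-n).factorial : ℝ))⁻¹ ≤ 1 := by
      rw [mul_inv_le_iff₀ (by positivity), one_mul, pow_two]
      exact_mod_cast N3
    calc ((j.factorial:ℝ))^s * (((2*i-n).factorial : ℝ))⁻¹
        = (((j.factorial:ℝ))^(2:ℕ) * (((2*i-n).factorial : ℝ))⁻¹) * ((j.factorial:ℝ))^(s-2) := by
          rw [e1]; ring
    _ ≤ 1 * ((j.factorial:ℝ))^(s-2) := by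
          apply mul_le_mul_of_nonneg_right e2; positivity
    _ = ((j.factorial:ℝ))^(s-2) := one_mul _
  calc ((i.factorial : ℝ)) ^ s * (((2*i-n).factorial : ℝ))⁻¹
      ≤ ((4:ℝ)^i * ((h.factorial:ℝ))^s * ((j.factorial:ℝ))^s) * (((2*i-n).factorial : ℝ))⁻¹ := by
        apply mul_le_mul_of_nonneg_right R1; positivity
  _ = ((h.factorial:ℝ))^s * ((4:ℝ)^i * (((j.factorial:ℝ))^s * (((2*i-n).factorial : ℝ))⁻¹)) := by
        ring
  _ ≤ (((n:ℝ)+1) * ((n.factorial:ℝ))^(s/2)) * ((4:ℝ)^i * (((j.factorial:ℝ))^(s-2))) := by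
        apply mul_le_mul R2 ?_ (by positivity) (by positivity)
        apply mul_le_mul_of_nonneg_left R3 (by positivity)
  _ = ((n:ℝ)+1) * ((n.factorial : ℝ)) ^ (s/2) * 4 ^ i * (((j.factorial:ℝ))) ^ (s-2) := by ring

lemma aux_summable_jfact {s : ℝ} (hs2 : s < 2) {B : ℝ} (hB : 0 < B) :
    Summable (fun j : ℕ => B^j * ((j.factorial:ℝ))^(s-2)) := by
  apply summable_of_ratio_norm_eventually_le (r := 1/2) (by norm_num)
  have htend : Tendsto (fun j : ℕ => (((j:ℝ)+1))^(s-2)) atTop (𝓝 0) := by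
    have h1 : Tendsto (fun x : ℝ => x ^ (-(2-s))) atTop (𝓝 0) := tendsto_rpow_neg_atTop (by linarith)
    have h2 : Tendsto (fun j : ℕ => ((j:ℝ)+1)) atTop atTop :=
      tendsto_atTop_add_const_right _ 1 tendsto_natCast_atTop_atTop
    have := h1.comp h2
    simpa [Function.comp_def, show -(2-s) = s-2 by ring] using this
  have hev : ∀ᶠ j : ℕ in atTop, (((j:ℝ)+1))^(s-2) < (2*B)⁻¹ := by
    have : (0:ℝ) < (2*B)⁻¹ := by positivity
    exact htend.eventually_lt_const this
  filter_upwards [hev] with j hjev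
  have hfj : B^(j+1) * (((j+1).factorial:ℝ))^(s-2)
      = (B * (((j:ℝ)+1))^(s-2)) * (B^j * ((j.factorial:ℝ))^(s-2)) := by
    have e : (((j+1).factorial : ℝ)) = ((j:ℝ)+1) * (j.factorial:ℝ) := by
      rw [Nat.factorial_succ]; push_cast; ring
    rw [e, Real.mul_rpow (by positivity) (by positivity), pow_succ]
    ring
  rw [Real.norm_eq_abs, Real.norm_eq_abs, hfj, abs_mul]
  have h1 : |B * (((j:ℝ)+1))^(s-2)| ≤ 1/2 := by
    rw [abs_of_pos (by positivity)]
    calc B * (((j:ℝ)+1))^(s-2) ≤ B * (2*B)⁻¹ := by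
          apply mul_le_mul_of_nonneg_left hjev.le hB.le
    _ = 1/2 := by field_simp
  calc |B * (((j:ℝ)+1))^(s-2)| * |B^j * ((j.factorial:ℝ))^(s-2)|
      ≤ (1/2) * |B^j * ((j.factorial:ℝ))^(s-2)| :=
        mul_le_mul_of_nonneg_right h1 (abs_nonneg _)

noncomputable def gevU (s M R : ℝ) (m n i : ℕ) : ℝ :=
  M * (((m+i).factorial : ℝ))^s / R^(m+i) * (if n ≤ 2*i then (((2*i-n).factorial : ℝ))⁻¹ else 0)

lemma gevU_nonneg {s M R : ℝ} (hM : 0 < M) (hR : 0 < R) (m n i : ℕ) :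
    0 ≤ gevU s M R m n i := by
  unfold gevU; split_ifs <;> positivity

lemma aux_fact_add_bound {s : ℝ} (hs0 : 0 ≤ s) (hs2 : s < 2) (m i : ℕ) :
    (((m+i).factorial : ℝ))^s ≤ 4^(m+i) * ((m.factorial:ℝ))^s * ((i.factorial:ℝ))^s := by
  have hmi : m ≤ m + i := Nat.le_add_right m i
  have e := Nat.choose_mul_factorial_mul_factorial hmi
  rw [Nat.add_sub_cancel_left] at e
  have N : (m+i).factorial ≤ 2^(m+i) * (m.factorial * i.factorial) := by
    calc (m+i).factorial = (m+i).choose m * m.factorial * i.factorial := e.symm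
    _ ≤ 2^(m+i) * m.factorial * i.factorial :=
        Nat.mul_le_mul (Nat.mul_le_mul_right _ (aux_choose_le_two_pow _ _)) le_rfl
    _ = 2^(m+i) * (m.factorial * i.factorial) := by ring
  have h1 : (((m+i).factorial : ℝ))^s ≤ ((2:ℝ)^(m+i) * ((m.factorial:ℝ) * (i.factorial:ℝ)))^s :=
    Real.rpow_le_rpow (by positivity) (by exact_mod_cast N) hs0
  have h2 : ((2:ℝ)^(m+i) * ((m.factorial:ℝ) * (i.factorial:ℝ)))^s
      = ((2:ℝ)^(m+i))^s * (((m.factorial:ℝ))^s * ((i.factorial:ℝ))^s) := by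
    rw [Real.mul_rpow (by positivity) (by positivity),
        Real.mul_rpow (by positivity) (by positivity)]
  have h3 : ((2:ℝ)^(m+i))^s ≤ (4:ℝ)^(m+i) := by
    calc ((2:ℝ)^(m+i))^s ≤ ((2:ℝ)^(m+i))^(2:ℝ) :=
      Real.rpow_le_rpow_of_exponent_le (one_le_pow₀ (by norm_num)) hs2.le
    _ = ((2:ℝ)^(m+i))^(2:ℕ) := aux_rpow_two_eq
    _ = (4:ℝ)^(m+i) := by rw [← pow_mul, mul_comm (m+i) 2, pow_mul]; norm_num
  calc (((m+i).factorial : ℝ))^s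
      ≤ ((2:ℝ)^(m+i))^s * (((m.factorial:ℝ))^s * ((i.factorial:ℝ))^s) := by rw [← h2]; exact h1
  _ ≤ (4:ℝ)^(m+i) * (((m.factorial:ℝ))^s * ((i.factorial:ℝ))^s) :=
      mul_le_mul_of_nonneg_right h3 (by positivity)
  _ = 4^(m+i) * ((m.factorial:ℝ))^s * ((i.factorial:ℝ))^s := by ring

noncomputable def gevV (s M R : ℝ) (m n i : ℕ) : ℝ :=
  (M * ((m.factorial:ℝ))^s * (4/R)^m * ((n:ℝ)+1) * ((n.factorial:ℝ))^(s/2)) *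
    ((16/R)^i * (((i - (n+1)/2).factorial:ℝ))^(s-2))

lemma gevU_le_gevV {s M R : ℝ} (hs0 : 0 ≤ s) (hs2 : s < 2) (hM : 0 < M) (hR : 0 < R)
    (m n i : ℕ) : gevU s M R m n i ≤ gevV s M R m n i := by
  unfold gevU gevV
  split_ifs with hni
  · have step1 := aux_fact_add_bound hs0 hs2 m i
    have step2 := aux_fact_bound hs0 hs2 hni
    have hP : (((m+i).factorial : ℝ))^s * (((2*i-n).factorial : ℝ))⁻¹
        ≤ 4^(m+i) * ((m.factorial:ℝ))^s *
          (((n:ℝ)+1) * ((n.factorial:ℝ))^(s/2) * 4^i * (((i - (n+1)/2).factorial:ℝ))^(s-2)) := by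
      calc (((m+i).factorial : ℝ))^s * (((2*i-n).factorial : ℝ))⁻¹
          ≤ (4^(m+i) * ((m.factorial:ℝ))^s * ((i.factorial:ℝ))^s) * (((2*i-n).factorial : ℝ))⁻¹ :=
            mul_le_mul_of_nonneg_right step1 (by positivity)
      _ = (4^(m+i) * ((m.factorial:ℝ))^s) * (((i.factorial:ℝ))^s * (((2*i-n).factorial : ℝ))⁻¹) := by
            ring
      _ ≤ (4^(m+i) * ((m.factorial:ℝ))^s) *
            (((n:ℝ)+1) * ((n.factorial:ℝ))^(s/2) * 4^i * (((i - (n+1)/2).factorial:ℝ))^(s-2)) :=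
            mul_le_mul_of_nonneg_left step2 (by positivity)
      _ = _ := by ring
    have e0 : M * (((m+i).factorial : ℝ))^s / R^(m+i) * (((2*i-n).factorial : ℝ))⁻¹
        = (M / R^(m+i)) * ((((m+i).factorial : ℝ))^s * (((2*i-n).factorial : ℝ))⁻¹) := by ring
    rw [e0]
    calc (M / R^(m+i)) * ((((m+i).factorial : ℝ))^s * (((2*i-n).factorial : ℝ))⁻¹)
        ≤ (M / R^(m+i)) * (4^(m+i) * ((m.factorial:ℝ))^s *
            (((n:ℝ)+1) * ((n.factorial:ℝ))^(s/2) * 4^i * (((i - (n+1)/2).factorial:ℝ))^(s-2))) :=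
          mul_le_mul_of_nonneg_left hP (by positivity)
    _ = (M * ((m.factorial:ℝ))^s * (4/R)^m * ((n:ℝ)+1) * ((n.factorial:ℝ))^(s/2)) *
          ((16/R)^i * (((i - (n+1)/2).factorial:ℝ))^(s-2)) := by
        rw [div_pow, div_pow, pow_add, show (16:ℝ) = 4*4 by norm_num, mul_pow]
        field_simp
        ring
  · simp only [mul_zero]
    positivity
lemma aux_gev_master {s M R : ℝ} (hs0 : 0 ≤ s) (hs2 : s < 2) (hM : 0 < M) (hR : 0 < R) :
    ∃ C R₁ R₂ : ℝ, 0 < C ∧ 0 < R₁ ∧ 0 < R₂ ∧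
      (∀ m n : ℕ, Summable (gevU s M R m n)) ∧
      (∀ m n : ℕ, ∑' i, gevU s M R m n i
        ≤ C * ((m.factorial:ℝ))^s * ((n.factorial:ℝ))^(s/2) / (R₁^m * R₂^n)) := by
  set K : ℝ := 16/R with hK
  have hKpos : 0 < K := by positivity
  set K' : ℝ := max K 1 with hK'
  have hK'1 : 1 ≤ K' := le_max_right _ _
  have hK'pos : 0 < K' := lt_of_lt_of_le one_pos hK'1
  have hKK' : K ≤ K' := le_max_left _ _
  set S : ℝ := ∑' j : ℕ, K^j * ((j.factorial:ℝ))^(s-2) with hS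
  have hgS : Summable (fun j : ℕ => K^j * ((j.factorial:ℝ))^(s-2)) :=
    aux_summable_jfact hs2 hKpos
  have hSnonneg : 0 ≤ S := tsum_nonneg (fun j => by positivity)
  have hsum_f : ∀ n : ℕ, Summable (fun i : ℕ => K^i * (((i - (n+1)/2).factorial:ℝ))^(s-2)) := by
    intro n
    set h := (n+1)/2
    apply (summable_nat_add_iff h).1
    have e : (fun j : ℕ => K^(j+h) * (((j + h - h).factorial:ℝ))^(s-2))
        = fun j : ℕ => K^h * (K^j * ((j.factorial:ℝ))^(s-2)) := by
      funext j
      rw [Nat.add_sub_cancel, pow_add]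
      ring
    rw [e]
    exact hgS.mul_left _
  have htsum_f : ∀ n : ℕ, ∑' i : ℕ, K^i * (((i - (n+1)/2).factorial:ℝ))^(s-2)
      ≤ K'^(n+1) * (((n:ℝ)+1) + S) := by
    intro n
    set h := (n+1)/2 with hh
    have hsplit := Summable.sum_add_tsum_nat_add h (hsum_f n)
    have htail : ∑' j : ℕ, K^(j+h) * (((j + h - h).factorial:ℝ))^(s-2) = K^h * S := by
      rw [hS, ← tsum_mul_left]
      congr 1
      funext j
      rw [Nat.add_sub_cancel, pow_add]
      ring
    have hhead : ∑ i ∈ Finset.range h, K^i * (((i - h).factorial:ℝ))^(s-2) ≤ h * K'^h := by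
      have hterm : ∀ i ∈ Finset.range h, K^i * (((i - h).factorial:ℝ))^(s-2) ≤ K'^h := by
        intro i hi
        have hih : i < h := Finset.mem_range.1 hi
        have e0 : i - h = 0 := by omega
        rw [e0]
        simp only [Nat.factorial_zero, Nat.cast_one, Real.one_rpow, mul_one]
        calc K^i ≤ K'^i := pow_le_pow_left₀ hKpos.le hKK' i
        _ ≤ K'^h := pow_le_pow_right₀ hK'1 hih.le
      calc ∑ i ∈ Finset.range h, K^i * (((i - h).factorial:ℝ))^(s-2)
          ≤ ∑ _i ∈ Finset.range h, K'^h := Finset.sum_le_sum hterm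
      _ = h * K'^h := by rw [Finset.sum_const, Finset.card_range, nsmul_eq_mul]
    have hKh : K^h ≤ K'^h := pow_le_pow_left₀ hKpos.le hKK' h
    have hhn : (h:ℝ) ≤ (n:ℝ)+1 := by exact_mod_cast (show h ≤ n+1 by omega)
    have hK'h : K'^h ≤ K'^(n+1) := pow_le_pow_right₀ hK'1 (by omega)
    calc ∑' i : ℕ, K^i * (((i - h).factorial:ℝ))^(s-2)
        = ∑ i ∈ Finset.range h, K^i * (((i - h).factorial:ℝ))^(s-2)
          + ∑' j : ℕ, K^(j+h) * (((j + h - h).factorial:ℝ))^(s-2) := hsplit.symm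
    _ ≤ ((n:ℝ)+1) * K'^(n+1) + K'^(n+1) * S := by
        apply add_le_add
        · calc (∑ i ∈ Finset.range h, K^i * (((i - h).factorial:ℝ))^(s-2)) ≤ h * K'^h := hhead
          _ ≤ ((n:ℝ)+1) * K'^(n+1) :=
            mul_le_mul hhn hK'h (by positivity) (by positivity)
        · rw [htail]
          exact mul_le_mul_of_nonneg_right (le_trans hKh hK'h) hSnonneg
    _ = K'^(n+1) * (((n:ℝ)+1) + S) := by ring
  -- the final constants
  refine ⟨4*(1+S)*K'*M, R/4, (4*K')⁻¹, by positivity, by positivity, by positivity, ?_, ?_⟩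
  · intro m n
    apply Summable.of_nonneg_of_le (gevU_nonneg hM hR m n) (gevU_le_gevV hs0 hs2 hM hR m n)
    have hs := (hsum_f n).mul_left
      (M * ((m.factorial:ℝ))^s * (4/R)^m * ((n:ℝ)+1) * ((n.factorial:ℝ))^(s/2))
    rw [hK] at hs
    unfold gevV
    exact hs
  · intro m n
    have hVsum : Summable (gevV s M R m n) := by
      have hs := (hsum_f n).mul_left
        (M * ((m.factorial:ℝ))^s * (4/R)^m * ((n:ℝ)+1) * ((n.factorial:ℝ))^(s/2))
      rw [hK] at hs
      unfold gevV
      exact hs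
    have hUsum : Summable (gevU s M R m n) :=
      Summable.of_nonneg_of_le (gevU_nonneg hM hR m n) (gevU_le_gevV hs0 hs2 hM hR m n) hVsum
    have h1 : ∑' i, gevU s M R m n i ≤ ∑' i, gevV s M R m n i :=
      Summable.tsum_le_tsum (gevU_le_gevV hs0 hs2 hM hR m n) hUsum hVsum
    have h2 : ∑' i, gevV s M R m n i
        = (M * ((m.factorial:ℝ))^s * (4/R)^m * ((n:ℝ)+1) * ((n.factorial:ℝ))^(s/2)) *
          ∑' i : ℕ, K^i * (((i - (n+1)/2).factorial:ℝ))^(s-2) := by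
      unfold gevV
      rw [← tsum_mul_left, hK]
    have hc : 0 ≤ M * ((m.factorial:ℝ))^s * (4/R)^m * ((n:ℝ)+1) * ((n.factorial:ℝ))^(s/2) := by
      positivity
    have h3 : ∑' i, gevU s M R m n i
        ≤ (M * ((m.factorial:ℝ))^s * (4/R)^m * ((n:ℝ)+1) * ((n.factorial:ℝ))^(s/2)) *
          (K'^(n+1) * (((n:ℝ)+1) + S)) := by
      calc ∑' i, gevU s M R m n i ≤ ∑' i, gevV s M R m n i := h1
      _ = _ := h2
      _ ≤ _ := mul_le_mul_of_nonneg_left (htsum_f n) hc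
    have hbr : ((n:ℝ)+1) * (K'^(n+1) * (((n:ℝ)+1) + S)) ≤ 4*(1+S)*K' * (4*K')^n := by
      have hn2 : (n:ℝ)+1 ≤ 2^(n+1) := by
        exact_mod_cast (Nat.lt_two_pow_self (n := n+1)).le
      have hns : ((n:ℝ)+1) + S ≤ ((n:ℝ)+1) * (1+S) := by nlinarith
      calc ((n:ℝ)+1) * (K'^(n+1) * (((n:ℝ)+1) + S))
          ≤ ((n:ℝ)+1) * (K'^(n+1) * (((n:ℝ)+1) * (1+S))) := by
            apply mul_le_mul_of_nonneg_left ?_ (by positivity)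
            exact mul_le_mul_of_nonneg_left hns (by positivity)
      _ = (((n:ℝ)+1) * ((n:ℝ)+1)) * (1+S) * K'^(n+1) := by ring
      _ ≤ ((2:ℝ)^(n+1) * 2^(n+1)) * (1+S) * K'^(n+1) := by
            apply mul_le_mul_of_nonneg_right ?_ (by positivity)
            apply mul_le_mul_of_nonneg_right ?_ (by positivity)
            exact mul_le_mul hn2 hn2 (by positivity) (by positivity)
      _ = 4*(1+S)*K' * (4*K')^n := by
            have h4 : (2:ℝ)^(n+1) * 2^(n+1) = 4 * 4^n := by
              rw [← pow_add, show n+1+(n+1) = 2*(n+1) by ring, pow_mul]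
              norm_num
              rw [pow_succ]
              ring
            rw [mul_pow, h4, pow_succ K']
            ring
    calc ∑' i, gevU s M R m n i
        ≤ (M * ((m.factorial:ℝ))^s * (4/R)^m * ((n:ℝ)+1) * ((n.factorial:ℝ))^(s/2)) *
          (K'^(n+1) * (((n:ℝ)+1) + S)) := h3
    _ = (M * ((m.factorial:ℝ))^s * (4/R)^m * ((n.factorial:ℝ))^(s/2)) *
          (((n:ℝ)+1) * (K'^(n+1) * (((n:ℝ)+1) + S))) := by ring
    _ ≤ (M * ((m.factorial:ℝ))^s * (4/R)^m * ((n.factorial:ℝ))^(s/2)) *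
          (4*(1+S)*K' * (4*K')^n) := mul_le_mul_of_nonneg_left hbr (by positivity)
    _ = 4*(1+S)*K'*M * ((m.factorial:ℝ))^s * ((n.factorial:ℝ))^(s/2) / ((R/4)^m * ((4*K')⁻¹)^n) := by
          rw [div_pow, inv_pow]
          field_simp
          ring
          rw [mul_assoc, ← mul_pow]; norm_num
noncomputable def gevC (n i : ℕ) (x : ℝ) : ℝ :=
  if n ≤ 2*i then x^(2*i-n)/(((2*i-n).factorial : ℝ)) else 0

lemma gevC_hasDerivAt (n i : ℕ) (x : ℝ) : HasDerivAt (gevC n i) (gevC (n+1) i x) x := by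
  by_cases h1 : n+1 ≤ 2*i
  · have h2 : n ≤ 2*i := by omega
    set k := 2*i - (n+1) with hk
    have e1 : 2*i - n = k+1 := by omega
    have efun : gevC n i = fun x' => x'^(k+1)/(((k+1).factorial : ℝ)) := by
      funext x'
      rw [gevC, if_pos h2, e1]
    have eval : gevC (n+1) i x = x^k/((k.factorial : ℝ)) := by
      rw [gevC, if_pos h1]
    rw [efun, eval]
    have hd := (hasDerivAt_pow (k+1) x).div_const (((k+1).factorial : ℝ))
    refine hd.congr_deriv ?_
    rw [Nat.factorial_succ]
    have hkf : ((k.factorial : ℝ)) ≠ 0 := by positivity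
    push_cast
    field_simp
  · by_cases h2 : n ≤ 2*i
    · have e0 : 2*i - n = 0 := by omega
      have efun : gevC n i = fun _ => (1:ℝ) := by
        funext x'
        rw [gevC, if_pos h2, e0]
        norm_num
      have eval : gevC (n+1) i x = 0 := by rw [gevC, if_neg h1]
      rw [efun, eval]
      exact hasDerivAt_const x 1
    · have efun : gevC n i = fun _ => (0:ℝ) := by
        funext x'
        rw [gevC, if_neg h2]
      have eval : gevC (n+1) i x = 0 := by rw [gevC, if_neg h1]
      rw [efun, eval]
      exact hasDerivAt_const x 0

lemma gevC_abs_le {n i : ℕ} {x : ℝ} (hx : |x| ≤ 2) :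
    |gevC n i x| ≤ (4:ℝ)^i * (if n ≤ 2*i then (((2*i-n).factorial : ℝ))⁻¹ else 0) := by
  rw [gevC]
  split_ifs with h
  · rw [abs_div, abs_of_pos (show (0:ℝ) < ((2*i-n).factorial : ℝ) by positivity),
        div_eq_mul_inv]
    apply mul_le_mul_of_nonneg_right ?_ (by positivity)
    calc |x^(2*i-n)| = |x|^(2*i-n) := abs_pow x _
    _ ≤ 2^(2*i-n) := pow_le_pow_left₀ (abs_nonneg x) hx _
    _ ≤ 2^(2*i) := pow_le_pow_right₀ (by norm_num) (by omega)
    _ = 4^i := by rw [pow_mul]; norm_num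
  · simp

-- gluing lemmas
lemma glue_interior {a b : ℝ} {f : ℝ → ℝ} {H : ℕ → ℝ → ℝ}
    (hf : Set.EqOn f (H 0) (Set.Ioo a b))
    (hH : ∀ k, ∀ t ∈ Set.Ioo a b, HasDerivAt (H k) (H (k+1) t) t) :
    ∀ m, Set.EqOn (iteratedDeriv m f) (H m) (Set.Ioo a b) := by
  intro m
  induction m with
  | zero => simpa [iteratedDeriv_zero] using hf
  | succ m ih =>
    intro t ht
    rw [iteratedDeriv_succ]
    have hev : iteratedDeriv m f =ᶠ[𝓝 t] H m :=
      Filter.eventually_of_mem (isOpen_Ioo.mem_nhds ht) ih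
    rw [hev.deriv_eq]
    exact (hH m t ht).deriv

lemma glue_left {a b : ℝ} (hab : a < b) {f : ℝ → ℝ} {H : ℕ → ℝ → ℝ}
    (hf : Set.EqOn f (H 0) (Set.Icc a b))
    (hH : ∀ k, ∀ t ∈ Set.Ioo a b, HasDerivAt (H k) (H (k+1) t) t)
    (hHa : ∀ k, HasDerivWithinAt (H k) (H (k+1) a) (Set.Ici a) a) :
    ∀ m, iteratedDeriv m f a = H m a ∨ iteratedDeriv m f a = 0 := by
  have hmid : ∀ m, Set.EqOn (iteratedDeriv m f) (H m) (Set.Ioo a b) :=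
    glue_interior (fun x hx => hf (Set.Ioo_subset_Icc_self hx)) hH
  intro m
  induction m with
  | zero =>
    left
    simpa [iteratedDeriv_zero] using hf (Set.left_mem_Icc.2 hab.le)
  | succ m _ =>
    rw [iteratedDeriv_succ]
    set F := iteratedDeriv m f with hF
    by_cases hd : DifferentiableAt ℝ F a
    · left
      have hne : (𝓝[Set.Ioo a b] a).NeBot := by
        rw [← mem_closure_iff_nhdsWithin_neBot, closure_Ioo hab.ne]
        exact ⟨le_refl a, hab.le⟩
      have hFa : F a = H m a := by
        have h1 : Filter.Tendsto F (𝓝[Set.Ioo a b] a) (𝓝 (F a)) :=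
          (hd.continuousAt.continuousWithinAt)
        have h2 : Filter.Tendsto F (𝓝[Set.Ioo a b] a) (𝓝 (H m a)) := by
          have h3 : Filter.Tendsto (H m) (𝓝[Set.Ici a] a) (𝓝 (H m a)) :=
            (hHa m).continuousWithinAt
          have h4 : Filter.Tendsto (H m) (𝓝[Set.Ioo a b] a) (𝓝 (H m a)) :=
            h3.mono_left (nhdsWithin_mono a (fun x hx => le_of_lt hx.1))
          apply h4.congr'
          exact Filter.eventually_of_mem self_mem_nhdsWithin (fun x hx => ((hmid m) hx).symm)
        exact tendsto_nhds_unique h1 h2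
      have hmem : Set.Ici a ∩ Set.Iio b ∈ 𝓝[Set.Ici a] a :=
        Filter.inter_mem self_mem_nhdsWithin
          (mem_nhdsWithin_of_mem_nhds (Iio_mem_nhds hab))
      have hevq : H m =ᶠ[𝓝[Set.Ici a] a] F := by
        filter_upwards [hmem] with z hz
        rcases eq_or_lt_of_le (show a ≤ z from hz.1) with hz1 | hz1
        · rw [← hz1, hFa]
        · exact ((hmid m) ⟨hz1, hz.2⟩).symm
      have hd1 : HasDerivWithinAt (H m) (deriv F a) (Set.Ici a) a :=
        (hd.hasDerivAt.hasDerivWithinAt).congr_of_eventuallyEq hevq hFa.symm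
      have hu : UniqueDiffWithinAt ℝ (Set.Ici a) a :=
        uniqueDiffOn_Ici a a Set.self_mem_Ici
      rw [← hd1.derivWithin hu, (hHa m).derivWithin hu]
    · right
      exact deriv_zero_of_not_differentiableAt hd

lemma glue_right {a b : ℝ} (hab : a < b) {f : ℝ → ℝ} {H : ℕ → ℝ → ℝ}
    (hf : Set.EqOn f (H 0) (Set.Icc a b))
    (hH : ∀ k, ∀ t ∈ Set.Ioo a b, HasDerivAt (H k) (H (k+1) t) t)
    (hHb : ∀ k, HasDerivWithinAt (H k) (H (k+1) b) (Set.Iic b) b) :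
    ∀ m, iteratedDeriv m f b = H m b ∨ iteratedDeriv m f b = 0 := by
  have hmid : ∀ m, Set.EqOn (iteratedDeriv m f) (H m) (Set.Ioo a b) :=
    glue_interior (fun x hx => hf (Set.Ioo_subset_Icc_self hx)) hH
  intro m
  induction m with
  | zero =>
    left
    simpa [iteratedDeriv_zero] using hf (Set.right_mem_Icc.2 hab.le)
  | succ m _ =>
    rw [iteratedDeriv_succ]
    set F := iteratedDeriv m f with hF
    by_cases hd : DifferentiableAt ℝ F b
    · left
      have hne : (𝓝[Set.Ioo a b] b).NeBot := by
        rw [← mem_closure_iff_nhdsWithin_neBot, closure_Ioo hab.ne]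
        exact ⟨hab.le, le_refl b⟩
      have hFb : F b = H m b := by
        have h1 : Filter.Tendsto F (𝓝[Set.Ioo a b] b) (𝓝 (F b)) :=
          (hd.continuousAt.continuousWithinAt)
        have h2 : Filter.Tendsto F (𝓝[Set.Ioo a b] b) (𝓝 (H m b)) := by
          have h3 : Filter.Tendsto (H m) (𝓝[Set.Iic b] b) (𝓝 (H m b)) :=
            (hHb m).continuousWithinAt
          have h4 : Filter.Tendsto (H m) (𝓝[Set.Ioo a b] b) (𝓝 (H m b)) :=
            h3.mono_left (nhdsWithin_mono b (fun x hx => le_of_lt hx.2))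
          apply h4.congr'
          exact Filter.eventually_of_mem self_mem_nhdsWithin (fun x hx => ((hmid m) hx).symm)
        exact tendsto_nhds_unique h1 h2
      have hmem : Set.Iic b ∩ Set.Ioi a ∈ 𝓝[Set.Iic b] b :=
        Filter.inter_mem self_mem_nhdsWithin
          (mem_nhdsWithin_of_mem_nhds (Ioi_mem_nhds hab))
      have hevq : H m =ᶠ[𝓝[Set.Iic b] b] F := by
        filter_upwards [hmem] with z hz
        have hzb : z ≤ b := hz.1
        have hza : a < z := hz.2
        rcases hzb.lt_or_eq with hz1 | hz1
        · exact ((hmid m) ⟨hza, hz1⟩).symm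
        · rw [hz1, hFb]
      have hd1 : HasDerivWithinAt (H m) (deriv F b) (Set.Iic b) b :=
        (hd.hasDerivAt.hasDerivWithinAt).congr_of_eventuallyEq hevq hFb.symm
      have hu : UniqueDiffWithinAt ℝ (Set.Iic b) b :=
        uniqueDiffOn_Iic b b Set.self_mem_Iic
      rw [← hd1.derivWithin hu, (hHb m).derivWithin hu]
    · right
      exact deriv_zero_of_not_differentiableAt hd
lemma gev_term_bound {s M R : ℝ} (hs0 : 0 ≤ s) (hM : 0 < M) (hR : 0 < R) {y : ℝ → ℝ} {t : ℝ}
    (hbt : ∀ i : ℕ, |iteratedDeriv i y t| ≤ M * ((i.factorial:ℝ))^s / R^i)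
    (m n i : ℕ) {x : ℝ} (hx : |x| ≤ 2) :
    |iteratedDeriv (m+i) y t * gevC n i x| ≤ gevU s M (R/4) m n i := by
  rw [abs_mul]
  have hB : (0:ℝ) ≤ (if n ≤ 2*i then (((2*i-n).factorial : ℝ))⁻¹ else 0) := by
    split_ifs <;> positivity
  have h1 : |iteratedDeriv (m+i) y t| * |gevC n i x|
      ≤ (M * (((m+i).factorial:ℝ))^s / R^(m+i)) *
        ((4:ℝ)^i * (if n ≤ 2*i then (((2*i-n).factorial : ℝ))⁻¹ else 0)) :=
    mul_le_mul (hbt (m+i)) (gevC_abs_le hx) (abs_nonneg _) (by positivity)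
  have h2 : (M * (((m+i).factorial:ℝ))^s / R^(m+i)) *
        ((4:ℝ)^i * (if n ≤ 2*i then (((2*i-n).factorial : ℝ))⁻¹ else 0))
      ≤ gevU s M (R/4) m n i := by
    unfold gevU
    have e : M * (((m+i).factorial:ℝ))^s / (R/4)^(m+i)
        = (M * (((m+i).factorial:ℝ))^s / R^(m+i)) * 4^(m+i) := by
      rw [div_pow]
      field_simp
    rw [e]
    have h4 : (4:ℝ)^i ≤ (4:ℝ)^(m+i) := pow_le_pow_right₀ (by norm_num) (by omega)
    calc (M * (((m+i).factorial:ℝ))^s / R^(m+i)) *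
          ((4:ℝ)^i * (if n ≤ 2*i then (((2*i-n).factorial : ℝ))⁻¹ else 0))
        = ((M * (((m+i).factorial:ℝ))^s / R^(m+i)) *
            (if n ≤ 2*i then (((2*i-n).factorial : ℝ))⁻¹ else 0)) * (4:ℝ)^i := by ring
    _ ≤ ((M * (((m+i).factorial:ℝ))^s / R^(m+i)) *
            (if n ≤ 2*i then (((2*i-n).factorial : ℝ))⁻¹ else 0)) * (4:ℝ)^(m+i) := by
          apply mul_le_mul_of_nonneg_left h4
          positivity
    _ = M * (((m+i).factorial:ℝ))^s / R^(m+i) * 4^(m+i) *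
          (if n ≤ 2*i then (((2*i-n).factorial : ℝ))⁻¹ else 0) := by ring
  exact le_trans h1 h2

lemma gev_partA {s M R : ℝ} (hs0 : 0 ≤ s) (hM : 0 < M) (hR : 0 < R) {y : ℝ → ℝ} {t : ℝ}
    (hbt : ∀ i : ℕ, |iteratedDeriv i y t| ≤ M * ((i.factorial:ℝ))^s / R^i)
    (hsumU : ∀ m n : ℕ, Summable (gevU s M (R/4) m n))
    {θt : ℝ → ℝ}
    (hθt : ∀ x : ℝ, θt x = ∑' i : ℕ, iteratedDeriv i y t * x ^ (2*i) / ((2*i).factorial : ℝ)) :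
    ∀ n : ℕ, ∀ x ∈ Set.Ioo (-2:ℝ) 2,
      iteratedDeriv n θt x = ∑' i : ℕ, iteratedDeriv i y t * gevC n i x := by
  have hb0 : ∀ (k i : ℕ) (z : ℝ), |z| ≤ 2 →
      ‖iteratedDeriv i y t * gevC k i z‖ ≤ gevU s M (R/4) 0 k i := by
    intro k i z hz
    rw [Real.norm_eq_abs]
    simpa using gev_term_bound hs0 hM hR hbt 0 k i hz
  intro n
  induction n with
  | zero =>
    intro x _
    rw [iteratedDeriv_zero, hθt x]
    apply tsum_congr
    intro i
    rw [gevC, if_pos (Nat.zero_le _), Nat.sub_zero, mul_div_assoc]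
  | succ n ih =>
    intro x hx
    rw [iteratedDeriv_succ]
    have hev : iteratedDeriv n θt =ᶠ[𝓝 x]
        (fun x' => ∑' i : ℕ, iteratedDeriv i y t * gevC n i x') :=
      Filter.eventually_of_mem (isOpen_Ioo.mem_nhds hx) (fun z hz => ih z hz)
    rw [hev.deriv_eq]
    have habs : ∀ z ∈ Set.Ioo (-2:ℝ) 2, |z| ≤ 2 := by
      intro z hz
      exact abs_le.mpr ⟨hz.1.le, hz.2.le⟩
    have hD : HasDerivAt (fun x' => ∑' i : ℕ, iteratedDeriv i y t * gevC n i x')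
        (∑' i : ℕ, iteratedDeriv i y t * gevC (n+1) i x) x := by
      apply hasDerivAt_tsum_of_isPreconnected (hsumU 0 (n+1)) isOpen_Ioo
        (convex_Ioo (-2:ℝ) 2).isPreconnected
        (fun i z _ => HasDerivAt.const_mul _ (gevC_hasDerivAt n i z))
        (fun i z hz => hb0 (n+1) i z (habs z hz))
        (show (0:ℝ) ∈ Set.Ioo (-2:ℝ) 2 by norm_num)
        ?_ hx
      apply Summable.of_norm_bounded (hsumU 0 n)
      intro i
      exact hb0 n i 0 (by norm_num)
    exact hD.deriv
noncomputable def gevH (y : ℝ → ℝ) (n : ℕ) (x : ℝ) (m : ℕ) (t : ℝ) : ℝ :=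
  ∑' i : ℕ, iteratedDeriv (m+i) y t * gevC n i x

lemma gev_partB {s M R t₁ t₂ : ℝ} (hs0 : 0 ≤ s) (hM : 0 < M) (hR : 0 < R) (ht : t₁ < t₂)
    {y : ℝ → ℝ} (hy : ContDiff ℝ (⊤ : ℕ∞) y)
    (hb : ∀ i : ℕ, ∀ t ∈ Set.Icc t₁ t₂,
      |iteratedDeriv i y t| ≤ M * ((i.factorial:ℝ))^s / R^i)
    (hsumU : ∀ m n : ℕ, Summable (gevU s M (R/4) m n))
    (n : ℕ) {x : ℝ} (hx : |x| ≤ 2) :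
    (∀ m, ∀ t ∈ Set.Ioo t₁ t₂, HasDerivAt (gevH y n x m) (gevH y n x (m+1) t) t) ∧
    (∀ m, HasDerivWithinAt (gevH y n x m) (gevH y n x (m+1) t₁) (Set.Ici t₁) t₁) ∧
    (∀ m, HasDerivWithinAt (gevH y n x m) (gevH y n x (m+1) t₂) (Set.Iic t₂) t₂) ∧
    (∀ m, ∀ t ∈ Set.Icc t₁ t₂, |gevH y n x m t| ≤ ∑' i, gevU s M (R/4) m n i) := by
  have hdy : ∀ (k : ℕ) (τ : ℝ), HasDerivAt (iteratedDeriv k y) (iteratedDeriv (k+1) y τ) τ := by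
    intro k τ
    have hdiff : Differentiable ℝ (iteratedDeriv k y) :=
      hy.differentiable_iteratedDeriv k (by exact_mod_cast lt_top_iff_ne_top.2 (by simp))
    rw [iteratedDeriv_succ]
    exact (hdiff τ).hasDerivAt
  have hterm : ∀ (m : ℕ) (τ : ℝ), τ ∈ Set.Icc t₁ t₂ → ∀ i : ℕ,
      ‖iteratedDeriv (m+i) y τ * gevC n i x‖ ≤ gevU s M (R/4) m n i := by
    intro m τ hτ i
    rw [Real.norm_eq_abs]
    exact gev_term_bound hs0 hM hR (fun k => hb k τ hτ) m n i hx
  have hmid : (t₁+t₂)/2 ∈ Set.Ioo t₁ t₂ := ⟨by linarith, by linarith⟩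
  have B1 : ∀ m, ∀ t ∈ Set.Ioo t₁ t₂, HasDerivAt (gevH y n x m) (gevH y n x (m+1) t) t := by
    intro m t htt
    have e : gevH y n x (m+1) t = ∑' i : ℕ, iteratedDeriv ((m+i)+1) y t * gevC n i x := by
      unfold gevH
      exact tsum_congr (fun i => by rw [show m+1+i = m+i+1 by omega])
    rw [e]
    unfold gevH
    have hbd : ∀ (i : ℕ) (τ : ℝ), τ ∈ Set.Ioo t₁ t₂ →
        ‖iteratedDeriv (m+i+1) y τ * gevC n i x‖ ≤ gevU s M (R/4) (m+1) n i := by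
      intro i τ hτ
      have h0 := hterm (m+1) τ (Set.Ioo_subset_Icc_self hτ) i
      rwa [show m+1+i = m+i+1 by omega] at h0
    have hsum0 : Summable (fun i : ℕ => iteratedDeriv (m+i) y ((t₁+t₂)/2) * gevC n i x) := by
      apply Summable.of_norm_bounded (hsumU m n)
      exact fun i => hterm m _ (Set.Ioo_subset_Icc_self hmid) i
    exact hasDerivAt_tsum_of_isPreconnected (hsumU (m+1) n) isOpen_Ioo
      (convex_Ioo t₁ t₂).isPreconnected
      (fun i τ _ => (hdy (m+i) τ).mul_const _)
      hbd hmid hsum0 htt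
  have B3 : ∀ m, ContinuousOn (gevH y n x m) (Set.Icc t₁ t₂) := by
    intro m
    have htu := tendstoUniformlyOn_tsum (hsumU m n)
      (fun i τ hτ => hterm m τ hτ i)
    apply htu.continuousOn
    apply Filter.Frequently.of_forall
    intro I
    apply continuous_finset_sum I (fun i _ => ?_) |>.continuousOn
    exact (hy.continuous_iteratedDeriv (m+i) (by exact_mod_cast le_top)).mul continuous_const
  have hIooL : Set.Ioo t₁ t₂ ∈ 𝓝[>] t₁ := Ioo_mem_nhdsGT_of_mem (Set.left_mem_Ico.2 ht)
  have hIooR : Set.Ioo t₁ t₂ ∈ 𝓝[<] t₂ := Ioo_mem_nhdsLT_of_mem (Set.right_mem_Ioc.2 ht)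
  refine ⟨B1, ?_, ?_, ?_⟩
  · intro m
    apply hasDerivWithinAt_Ici_of_tendsto_deriv (s := Set.Ioo t₁ t₂)
      (fun τ hτ => (B1 m τ hτ).differentiableAt.differentiableWithinAt)
      (((B3 m).continuousWithinAt (Set.left_mem_Icc.2 ht.le)).mono Set.Ioo_subset_Icc_self)
      hIooL
    have h1 : Filter.Tendsto (gevH y n x (m+1)) (𝓝[>] t₁) (𝓝 (gevH y n x (m+1) t₁)) :=
      ((B3 (m+1)).continuousWithinAt (Set.left_mem_Icc.2 ht.le)).mono_left
        (le_trans (nhdsWithin_le_of_mem hIooL) (nhdsWithin_mono _ Set.Ioo_subset_Icc_self))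
    apply h1.congr'
    filter_upwards [hIooL] with τ hτ
    exact ((B1 m τ hτ).deriv).symm
  · intro m
    apply hasDerivWithinAt_Iic_of_tendsto_deriv (s := Set.Ioo t₁ t₂)
      (fun τ hτ => (B1 m τ hτ).differentiableAt.differentiableWithinAt)
      (((B3 m).continuousWithinAt (Set.right_mem_Icc.2 ht.le)).mono Set.Ioo_subset_Icc_self)
      hIooR
    have h1 : Filter.Tendsto (gevH y n x (m+1)) (𝓝[<] t₂) (𝓝 (gevH y n x (m+1) t₂)) :=
      ((B3 (m+1)).continuousWithinAt (Set.right_mem_Icc.2 ht.le)).mono_left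
        (le_trans (nhdsWithin_le_of_mem hIooR) (nhdsWithin_mono _ Set.Ioo_subset_Icc_self))
    apply h1.congr'
    filter_upwards [hIooR] with τ hτ
    exact ((B1 m τ hτ).deriv).symm
  · intro m τ hτ
    have hsn : Summable (fun i => ‖iteratedDeriv (m+i) y τ * gevC n i x‖) :=
      Summable.of_nonneg_of_le (fun i => norm_nonneg _) (hterm m τ hτ) (hsumU m n)
    calc |gevH y n x m τ| = ‖∑' i : ℕ, iteratedDeriv (m+i) y τ * gevC n i x‖ := rfl
    _ ≤ ∑' i : ℕ, ‖iteratedDeriv (m+i) y τ * gevC n i x‖ := norm_tsum_le_tsum_norm hsn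
    _ ≤ ∑' i, gevU s M (R/4) m n i := Summable.tsum_le_tsum (hterm m τ hτ) hsn (hsumU m n)
theorem flat_solution_gevrey_estimates (s t₁ t₂ M R : ℝ) (hs0 : 0 ≤ s) (hs2 : s < 2)
    (ht : t₁ < t₂) (hM : 0 < M) (hR : 0 < R) (y : ℝ → ℝ) (hy : ContDiff ℝ (⊤ : ℕ∞) y)
    (hb : ∀ i : ℕ, ∀ t ∈ Set.Icc t₁ t₂,
      |iteratedDeriv i y t| ≤ M * (i.factorial : ℝ) ^ s / R ^ i)
    (θ : ℝ → ℝ → ℝ)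
    (hθ : ∀ t x, θ t x = ∑' i : ℕ, iteratedDeriv i y t * x ^ (2 * i) / ((2 * i).factorial : ℝ)) :
    ∃ C R₁ R₂ : ℝ, 0 < C ∧ 0 < R₁ ∧ 0 < R₂ ∧
      ∀ m n : ℕ, ∀ t ∈ Set.Icc t₁ t₂, ∀ x ∈ Set.Icc (0 : ℝ) 1,
        |iteratedDeriv m (fun t' => iteratedDeriv n (fun x' => θ t' x') x) t|
          ≤ C * (m.factorial : ℝ) ^ s * (n.factorial : ℝ) ^ (s / 2) / (R₁ ^ m * R₂ ^ n) := by
  have hR4 : 0 < R/4 := by positivity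
  obtain ⟨C, R₁, R₂, hC, hR₁, hR₂, hsumU, hbound⟩ := aux_gev_master hs0 hs2 hM hR4
  refine ⟨C, R₁, R₂, hC, hR₁, hR₂, ?_⟩
  intro m n t htmem x hxmem
  have hx2 : |x| ≤ 2 := abs_le.mpr ⟨by linarith [hxmem.1], by linarith [hxmem.2]⟩
  have hxIoo : x ∈ Set.Ioo (-2:ℝ) 2 := ⟨by linarith [hxmem.1], by linarith [hxmem.2]⟩
  obtain ⟨B1, B2L, B2R, Hbd⟩ := gev_partB hs0 hM hR ht hy hb hsumU n hx2
  have hEq : Set.EqOn (fun t' => iteratedDeriv n (fun x' => θ t' x') x) (gevH y n x 0)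
      (Set.Icc t₁ t₂) := by
    intro τ hτ
    have hA := gev_partA hs0 hM hR (fun i => hb i τ hτ) hsumU
      (θt := fun x' => θ τ x') (fun x' => hθ τ x') n x hxIoo
    show iteratedDeriv n (fun x' => θ τ x') x = gevH y n x 0 τ
    rw [hA]
    unfold gevH
    exact tsum_congr (fun i => by rw [Nat.zero_add])
  have hRHS : ∀ τ ∈ Set.Icc t₁ t₂, |gevH y n x m τ|
      ≤ C * (m.factorial : ℝ) ^ s * (n.factorial : ℝ) ^ (s / 2) / (R₁ ^ m * R₂ ^ n) :=
    fun τ hτ => le_trans (Hbd m τ hτ) (hbound m n)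
  have hRHS0 : 0 ≤ C * (m.factorial : ℝ) ^ s * (n.factorial : ℝ) ^ (s / 2) / (R₁ ^ m * R₂ ^ n) := by
    apply div_nonneg
    · exact mul_nonneg (mul_nonneg hC.le (Real.rpow_nonneg (by positivity) _))
        (Real.rpow_nonneg (by positivity) _)
    · exact mul_nonneg (pow_nonneg hR₁.le m) (pow_nonneg hR₂.le n)
  rcases eq_or_lt_of_le htmem.1 with h1 | h1
  · rcases glue_left ht hEq B1 B2L m with hv | hv
    · rw [← h1, hv]
      exact hRHS t₁ (Set.left_mem_Icc.2 ht.le)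
    · rw [← h1, hv, abs_zero]
      exact hRHS0
  · rcases eq_or_lt_of_le htmem.2 with h2 | h2
    · rcases glue_right ht hEq B1 B2R m with hv | hv
      · rw [h2, hv]
        exact hRHS t₂ (Set.right_mem_Icc.2 ht.le)
      · rw [h2, hv, abs_zero]
        exact hRHS0
    · have hmid := glue_interior (fun z hz => hEq (Set.Ioo_subset_Icc_self hz)) B1 m ⟨h1, h2⟩
      rw [hmid]
      exact hRHS t htmem
end

section
/- Let θ₀ ∈ L²(0,1) with cosine coefficients (c_n) and τ > 0. Define y_i := √2 (-π²)^i ∑_{n≥0} c_n e^{-n²π²τ} n^{2i}. Then there is a constant C depending only on θ₀ such that |y_i| ≤ C (1 + 1/√τ) · i!/τ^i for all i ≥ 0. -/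
/-!
With `x = π²τn²`, the `n`-th term of `y_i` is `c_n x^i e^{-x} / τ^i`. Maximising
`x^i e^{-x i/(i+1)}` gives `x^i e^{-x} ≤ ((i+1)/e)^i e^{-x/(i+1)}`, so the sum is controlled by
the Gaussian sum `∑ e^{-a n²} ≤ e (1 + 1/√a)` with `a = π²τ/(i+1)`. This costs a factor
`√(i+1)`, which Stirling's lower bound for `(i+1)!` absorbs: `√(i+1) ((i+1)/e)^i ≤ e i!`.
Finally `|c_n| ≤ ‖c‖₂`.
-/

open Real
open scoped Nat

lemma pow_mul_exp_neg_le (i : ℕ) {y : ℝ} (hy : 0 ≤ y) :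
    y ^ i * exp (-y) ≤ ((i + 1) / exp 1) ^ i * exp (-(y / (i + 1))) := by
  set t := y / (i + 1) with ht
  have hy_eq : y = (i + 1) * t := by rw [ht]; field_simp
  have hexp : exp (-y) = exp (-t) ^ i * exp (-t) := by
    rw [← exp_nat_mul, ← exp_add, hy_eq]; ring_nf
  calc y ^ i * exp (-y) = ((i + 1) * (t * exp (-t))) ^ i * exp (-t) := by
        rw [hexp, hy_eq, mul_pow, mul_pow, mul_pow]; ring
    _ ≤ ((i + 1) * exp (-1)) ^ i * exp (-t) := by
        gcongr
        exact mul_exp_neg_le_exp_neg_one t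
    _ = ((i + 1) / exp 1) ^ i * exp (-t) := by rw [exp_neg, div_eq_mul_inv]

lemma sqrt_succ_mul_pow_le_exp_mul_factorial (n : ℕ) :
    √(n + 1) * ((n + 1) / exp 1) ^ n ≤ exp 1 * n ! := by
  set x := ((n : ℝ) + 1) / exp 1
  have hstirling : √(2 * π * (n + 1)) * x ^ n * x ≤ (n + 1) * n ! := by
    simpa [pow_succ, mul_assoc, Nat.factorial_succ] using Stirling.le_factorial_stirling (n + 1)
  have hsqrt : √(n + 1) ≤ √(2 * π * (n + 1)) := sqrt_le_sqrt (by nlinarith [pi_gt_three])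
  rw [← div_le_iff₀' (exp_pos 1)]
  calc √(n + 1) * x ^ n / exp 1 = √(n + 1) * x ^ n * x / (n + 1) := by
        simp only [x]; field_simp
    _ ≤ √(2 * π * (n + 1)) * x ^ n * x / (n + 1) := by gcongr
    _ ≤ (n + 1) * n ! / (n + 1) := by gcongr
    _ = n ! := by field_simp

lemma exp_neg_mul_sq_le {a : ℝ} (ha : 0 ≤ a) (n : ℕ) :
    exp (-(a * n ^ 2)) ≤ exp 1 * exp (-√a) ^ n := by
  rw [← exp_nat_mul, ← exp_add]
  apply exp_le_exp.mpr
  nlinarith [sq_nonneg (√a * n - 1), sq_sqrt ha]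

lemma summable_exp_neg_mul_sq {a : ℝ} (ha : 0 < a) :
    Summable fun n : ℕ => exp (-(a * n ^ 2)) :=
  .of_nonneg_of_le (fun _ => (exp_pos _).le) (exp_neg_mul_sq_le ha.le)
    ((summable_geometric_of_lt_one (exp_pos _).le (by simpa using ha)).mul_left _)

lemma inv_one_sub_exp_neg_le {s : ℝ} (hs : 0 < s) : (1 - exp (-s))⁻¹ ≤ 1 + 1 / s := by
  have : exp (-s) ≤ (1 + s)⁻¹ := by
    rw [exp_neg]; exact inv_anti₀ (by positivity) (by linarith [add_one_le_exp s])
  rw [inv_le_iff_one_le_mul₀ (by simpa using hs)]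
  calc (1 : ℝ) = (1 + 1 / s) * (1 - (1 + s)⁻¹) := by field_simp; ring
    _ ≤ (1 + 1 / s) * (1 - exp (-s)) := by gcongr

lemma tsum_exp_neg_mul_sq_le {a : ℝ} (ha : 0 < a) :
    ∑' n : ℕ, exp (-(a * n ^ 2)) ≤ exp 1 * (1 + 1 / √a) := by
  have hr : exp (-√a) < 1 := by simpa using ha
  calc ∑' n : ℕ, exp (-(a * n ^ 2)) ≤ ∑' n : ℕ, exp 1 * exp (-√a) ^ n :=
        (summable_exp_neg_mul_sq ha).tsum_le_tsum (exp_neg_mul_sq_le ha.le)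
          ((summable_geometric_of_lt_one (exp_pos _).le hr).mul_left _)
    _ = exp 1 * (1 - exp (-√a))⁻¹ := by
        rw [tsum_mul_left, tsum_geometric_of_lt_one (exp_pos _).le hr]
    _ ≤ exp 1 * (1 + 1 / √a) := by gcongr; exact inv_one_sub_exp_neg_le (by positivity)

lemma pow_mul_exp_neg_mul_sq_le {b : ℝ} (hb : 0 ≤ b) (i n : ℕ) :
    (b * n ^ 2) ^ i * exp (-(b * n ^ 2)) ≤
      ((i + 1) / exp 1) ^ i * exp (-(b / (i + 1) * n ^ 2)) := by
  convert pow_mul_exp_neg_le i (by positivity : 0 ≤ b * n ^ 2) using 4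
  ring

lemma summable_pow_mul_exp_neg_mul_sq {b : ℝ} (hb : 0 < b) (i : ℕ) :
    Summable fun n : ℕ => (b * n ^ 2) ^ i * exp (-(b * n ^ 2)) :=
  .of_nonneg_of_le (fun _ => by positivity) (pow_mul_exp_neg_mul_sq_le hb.le i)
    ((summable_exp_neg_mul_sq (by positivity)).mul_left _)

lemma tsum_pow_mul_exp_neg_mul_sq_le {b : ℝ} (hb : 0 < b) (i : ℕ) :
    ∑' n : ℕ, (b * n ^ 2) ^ i * exp (-(b * n ^ 2)) ≤ exp 1 ^ 2 * (1 + 1 / √b) * i ! := by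
  have ha : 0 < b / (i + 1) := by positivity
  have hinv_sqrt : 1 / √(b / (i + 1)) = √(i + 1) / √b := by
    rw [sqrt_div hb.le]; field_simp
  set M := ((i + 1 : ℝ) / exp 1) ^ i
  have hM : M ≤ √(i + 1) * M := le_mul_of_one_le_left (by positivity) (by simp)
  have hstirling := sqrt_succ_mul_pow_le_exp_mul_factorial i
  calc ∑' n : ℕ, (b * n ^ 2) ^ i * exp (-(b * n ^ 2))
      ≤ ∑' n : ℕ, M * exp (-(b / (i + 1) * n ^ 2)) :=
        (summable_pow_mul_exp_neg_mul_sq hb i).tsum_le_tsum (pow_mul_exp_neg_mul_sq_le hb.le i)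
          ((summable_exp_neg_mul_sq ha).mul_left _)
    _ ≤ M * (exp 1 * (1 + √(i + 1) / √b)) := by
        rw [tsum_mul_left, ← hinv_sqrt]; gcongr; exact tsum_exp_neg_mul_sq_le ha
    _ = exp 1 * (M + √(i + 1) * M / √b) := by ring
    _ ≤ exp 1 * (exp 1 * i ! + exp 1 * i ! / √b) := by gcongr; linarith
    _ = exp 1 ^ 2 * (1 + 1 / √b) * i ! := by ring

lemma abs_le_sqrt_tsum_sq {c : ℕ → ℝ} (hc : Summable fun n => c n ^ 2) (n : ℕ) :
    |c n| ≤ √(∑' m, c m ^ 2) := by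
  rw [← sqrt_sq_eq_abs]
  exact sqrt_le_sqrt (hc.le_tsum n fun _ _ => sq_nonneg _)

lemma abs_tsum_mul_le {ι : Type*} {c g : ι → ℝ} {B : ℝ} (hc : ∀ n, |c n| ≤ B)
    (hg₀ : ∀ n, 0 ≤ g n) (hg : Summable g) : |∑' n, c n * g n| ≤ B * ∑' n, g n := by
  rw [← norm_eq_abs]
  refine tsum_of_norm_bounded (hg.hasSum.mul_left B) fun n => ?_
  rw [norm_mul, norm_of_nonneg (hg₀ n), norm_eq_abs]
  exact mul_le_mul_of_nonneg_right (hc n) (hg₀ n)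

lemma exp_neg_sq_mul_mul_pow_eq {p τ : ℝ} (hp : p ≠ 0) (hτ : τ ≠ 0) (x : ℝ) (i : ℕ) :
    exp (-x ^ 2 * p * τ) * x ^ (2 * i) =
      (p ^ i * τ ^ i)⁻¹ * ((p * τ * x ^ 2) ^ i * exp (-(p * τ * x ^ 2))) := by
  rw [mul_pow, mul_pow, pow_mul]
  field_simp

theorem taylor_coefficients_bound (c : ℕ → ℝ) (hc : Summable fun n => (c n) ^ 2) :
    ∃ C : ℝ, 0 < C ∧ ∀ τ : ℝ, 0 < τ → ∀ i : ℕ,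
      |Real.sqrt 2 * (-Real.pi ^ 2) ^ i *
          ∑' n : ℕ, c n * Real.exp (-(n : ℝ) ^ 2 * Real.pi ^ 2 * τ) * (n : ℝ) ^ (2 * i)|
        ≤ C * (1 + 1 / Real.sqrt τ) * (i.factorial : ℝ) / τ ^ i := by
  set B := √(∑' n, c n ^ 2)
  have hc_le (n : ℕ) : |c n| ≤ B + 1 := (abs_le_sqrt_tsum_sq hc n).trans (by linarith)
  refine ⟨√2 * exp 1 ^ 2 * (B + 1), by positivity, fun τ hτ i => ?_⟩
  simp_rw [mul_assoc (c _)]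
  rw [abs_mul, abs_mul, abs_pow, abs_neg, abs_of_nonneg (sqrt_nonneg 2),
    abs_of_nonneg (sq_nonneg π)]
  set g : ℕ → ℝ := fun n => exp (-(n : ℝ) ^ 2 * π ^ 2 * τ) * (n : ℝ) ^ (2 * i)
  set b := π ^ 2 * τ
  have hb : 0 < b := by positivity
  have hg : g = fun n : ℕ => ((π ^ 2) ^ i * τ ^ i)⁻¹ * ((b * n ^ 2) ^ i * exp (-(b * n ^ 2))) :=
    funext fun n => exp_neg_sq_mul_mul_pow_eq (by positivity) hτ.ne' n i
  have hg_summable : Summable g := hg ▸ (summable_pow_mul_exp_neg_mul_sq hb i).mul_left _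
  have hsqrt : 1 / √b ≤ 1 / √τ := by
    gcongr; exact le_mul_of_one_le_left hτ.le (by nlinarith [pi_gt_three])
  calc √2 * (π ^ 2) ^ i * |∑' n, c n * g n|
      ≤ √2 * (π ^ 2) ^ i * ((B + 1) * ∑' n, g n) := by
        gcongr; exact abs_tsum_mul_le hc_le (fun n => by positivity) hg_summable
    _ = √2 * (B + 1) * (∑' n : ℕ, (b * n ^ 2) ^ i * exp (-(b * n ^ 2))) /
          τ ^ i := by
        rw [hg, tsum_mul_left]; field_simp
    _ ≤ √2 * (B + 1) * (exp 1 ^ 2 * (1 + 1 / √b) * i !) / τ ^ i := by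
        gcongr; exact tsum_pow_mul_exp_neg_mul_sq_le hb i
    _ = √2 * exp 1 ^ 2 * (B + 1) * (1 + 1 / √b) * i ! / τ ^ i := by ring
    _ ≤ √2 * exp 1 ^ 2 * (B + 1) * (1 + 1 / √τ) * i ! / τ ^ i := by gcongr
end

section
/- Let s ∈ (1,2), M₁, R₁ > 0, and suppose |y^(i)(t)| ≤ M₁ (i!)^s / R₁^i for all i and t. Then for any C₁ < 2 - s there is a constant K (depending on s, C₁, R₁, M₁) such that for all integers N ≥ 3 and all t, ∑_{i > N} |y^(i)(t)|/(2i)! ≤ K e^{-C₁ N ln N}. -/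
open Real

/-- `x^i ≤ (i!)^δ * exp (δ * x^(1/δ))` for `x ≥ 0`, `δ > 0`. -/
lemma aux_pow_le_rpow_factorial (x δ : ℝ) (hx : 0 ≤ x) (hδ : 0 < δ) (i : ℕ) :
    x ^ i ≤ (i.factorial : ℝ) ^ δ * Real.exp (δ * x ^ (1/δ)) := by
  set yv : ℝ := x ^ (1/δ) with hy
  have hy0 : 0 ≤ yv := Real.rpow_nonneg hx _
  have h1 : yv ^ i ≤ (i.factorial : ℝ) * Real.exp yv := by
    have := Real.pow_div_factorial_le_exp yv hy0 i
    have hf : (0:ℝ) < i.factorial := by exact_mod_cast i.factorial_pos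
    rw [div_le_iff₀ hf] at this
    linarith [this]
  have h2 : (yv ^ i) ^ δ ≤ ((i.factorial : ℝ) * Real.exp yv) ^ δ :=
    Real.rpow_le_rpow (by positivity) h1 hδ.le
  have h3 : (yv ^ i) ^ δ = x ^ i := by
    rw [← Real.rpow_natCast yv i, ← Real.rpow_mul hy0, hy, ← Real.rpow_mul hx]
    rw [show 1/δ * (↑i * δ) = (i:ℝ) by field_simp, Real.rpow_natCast]
  have h4 : ((i.factorial : ℝ) * Real.exp yv) ^ δ
      = (i.factorial : ℝ) ^ δ * Real.exp (δ * yv) := by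
    rw [Real.mul_rpow (by positivity) (Real.exp_pos _).le, ← Real.exp_mul, mul_comm yv δ]
  rw [h3, h4] at h2
  exact h2

theorem truncation_error_delta1 (s M₁ R₁ t₁ t₂ C₁ : ℝ) (hs1 : 1 < s) (hs2 : s < 2)
    (hM : 0 < M₁) (hR : 0 < R₁) (hC : C₁ < 2 - s)
    (y : ℝ → ℝ) (hy : ContDiff ℝ (⊤ : ℕ∞) y)
    (hb : ∀ i : ℕ, ∀ t ∈ Set.Icc t₁ t₂,
      |iteratedDeriv i y t| ≤ M₁ * (i.factorial : ℝ) ^ s / R₁ ^ i) :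
    ∃ K : ℝ, 0 < K ∧ ∀ N : ℕ, 3 ≤ N → ∀ t ∈ Set.Icc t₁ t₂,
      (∑' i : ℕ, if N < i then |iteratedDeriv i y t| / ((2 * i).factorial : ℝ) else 0)
        ≤ K * Real.exp (-C₁ * N * Real.log N) := by
  have hε0 : 0 < 2 - s := by linarith
  obtain ⟨δ, hδ0, hδle, hδle2⟩ : ∃ δ : ℝ, 0 < δ ∧ δ ≤ (2-s)/2 ∧ δ ≤ (2 - s - C₁)/2 :=
    ⟨min ((2-s)/2) ((2 - s - C₁)/2), lt_min (by linarith) (by linarith),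
      min_le_left _ _, min_le_right _ _⟩
  obtain ⟨β, hβdef⟩ : ∃ β : ℝ, β = 2 - s - δ := ⟨_, rfl⟩
  have hβ0 : 0 < β := by rw [hβdef]; linarith
  obtain ⟨γ, hγdef⟩ : ∃ γ : ℝ, γ = β - C₁ := ⟨_, rfl⟩
  have hγ0 : 0 < γ := by rw [hγdef, hβdef]; linarith
  obtain ⟨A, hAdef⟩ : ∃ A : ℝ, A = Real.exp (δ * (4/R₁) ^ (1/δ)) := ⟨_, rfl⟩
  have hA0 : 0 < A := hAdef ▸ Real.exp_pos _
  obtain ⟨B, hBdef⟩ : ∃ B : ℝ, B = β * Real.exp (β/γ) := ⟨_, rfl⟩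
  refine ⟨2 * M₁ * A * Real.exp B, by positivity, ?_⟩
  intro N hN t ht
  -- the geometric majorant
  obtain ⟨D, hDdef⟩ : ∃ D : ℝ, D = M₁ * A * ((N+1).factorial : ℝ) ^ (-β) * (1/2 : ℝ) ^ N :=
    ⟨_, rfl⟩
  have hD0 : 0 < D := by
    have h : (0:ℝ) < ((N+1).factorial : ℝ) ^ (-β) :=
      Real.rpow_pos_of_pos (by exact_mod_cast (N+1).factorial_pos) _
    rw [hDdef]; positivity
  have key : ∀ i : ℕ, (if N < i then |iteratedDeriv i y t| / ((2 * i).factorial : ℝ) else 0)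
      ≤ D * (1/2 : ℝ) ^ i := by
    intro i
    by_cases hi : N < i
    · simp only [hi, if_true]
      have hfac : (0:ℝ) < (i.factorial : ℝ) := by exact_mod_cast i.factorial_pos
      have h2fac : (0:ℝ) < ((2*i).factorial : ℝ) := by exact_mod_cast (2*i).factorial_pos
      have hstep1 : |iteratedDeriv i y t| / ((2 * i).factorial : ℝ)
          ≤ M₁ * (i.factorial : ℝ) ^ s / R₁ ^ i / ((2*i).factorial : ℝ) :=
        div_le_div_of_nonneg_right (hb i t ht) h2fac.le
      -- (i!)^2 ≤ (2i)!
      have hsq : (i.factorial : ℝ) * (i.factorial : ℝ) ≤ ((2*i).factorial : ℝ) := by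
        have := Nat.factorial_mul_factorial_dvd_factorial_add i i
        have h := Nat.le_of_dvd (Nat.factorial_pos _) this
        rw [show i + i = 2*i by ring] at h
        exact_mod_cast h
      have hstep2 : M₁ * (i.factorial : ℝ) ^ s / R₁ ^ i / ((2*i).factorial : ℝ)
          ≤ M₁ * (i.factorial : ℝ) ^ (s - 2) * (1/R₁) ^ i := by
        have h1 : (i.factorial : ℝ) ^ s / ((2*i).factorial : ℝ)
            ≤ (i.factorial : ℝ) ^ (s - 2) := by
          rw [div_le_iff₀ h2fac]
          have : (i.factorial : ℝ) ^ (s-2) * ((i.factorial : ℝ) * (i.factorial : ℝ))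
              = (i.factorial : ℝ) ^ s := by
            rw [show ((i.factorial:ℝ)) * ((i.factorial:ℝ)) =
              (i.factorial:ℝ) ^ ((2:ℕ):ℝ) by rw [Real.rpow_natCast]; ring]
            rw [← Real.rpow_add hfac]
            norm_num
          calc (i.factorial : ℝ) ^ s
              = (i.factorial : ℝ) ^ (s-2) * ((i.factorial : ℝ) * (i.factorial : ℝ)) := this.symm
            _ ≤ (i.factorial : ℝ) ^ (s-2) * ((2*i).factorial : ℝ) := by
                apply mul_le_mul_of_nonneg_left hsq (Real.rpow_nonneg hfac.le _)
        calc M₁ * (i.factorial : ℝ) ^ s / R₁ ^ i / ((2*i).factorial : ℝ)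
            = M₁ * ((i.factorial : ℝ) ^ s / ((2*i).factorial : ℝ)) * (1/R₁) ^ i := by
              rw [div_pow, one_pow]; ring
          _ ≤ M₁ * (i.factorial : ℝ) ^ (s - 2) * (1/R₁) ^ i := by
              apply mul_le_mul_of_nonneg_right _ (by positivity)
              exact mul_le_mul_of_nonneg_left h1 hM.le
      -- split exponent
      have hsplit : (i.factorial : ℝ) ^ (s - 2)
          = (i.factorial : ℝ) ^ (-β) * (i.factorial : ℝ) ^ (-δ) := by
        rw [← Real.rpow_add hfac]
        congr 1
        simp only [hβdef]; ring
      -- (i!)^(-δ) * (1/R₁)^i ≤ A * (1/4)^i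
      have hstep3 : (i.factorial : ℝ) ^ (-δ) * (1/R₁) ^ i ≤ A * (1/4 : ℝ) ^ i := by
        have hx : (0:ℝ) ≤ 4/R₁ := by positivity
        have h := aux_pow_le_rpow_factorial (4/R₁) δ hx hδ0 i
        rw [← hAdef] at h
        have hpow : (1/R₁ : ℝ) ^ i = (4/R₁) ^ i * (1/4 : ℝ) ^ i := by
          rw [← mul_pow]; congr 1; field_simp
        rw [hpow, Real.rpow_neg hfac.le]
        have hfd : (0:ℝ) < (i.factorial : ℝ) ^ δ := Real.rpow_pos_of_pos hfac _
        calc ((i.factorial : ℝ) ^ δ)⁻¹ * ((4/R₁) ^ i * (1/4 : ℝ) ^ i)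
            ≤ ((i.factorial : ℝ) ^ δ)⁻¹ * (((i.factorial : ℝ) ^ δ * A) * (1/4 : ℝ) ^ i) := by
              apply mul_le_mul_of_nonneg_left _ (by positivity)
              exact mul_le_mul_of_nonneg_right h (by positivity)
          _ = A * (1/4 : ℝ) ^ i := by field_simp
      -- (i!)^(-β) ≤ ((N+1)!)^(-β)
      have hstep4 : (i.factorial : ℝ) ^ (-β) ≤ ((N+1).factorial : ℝ) ^ (-β) := by
        have hle : ((N+1).factorial : ℝ) ≤ (i.factorial : ℝ) := by
          exact_mod_cast Nat.factorial_le (by omega)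
        have hNf : (0:ℝ) < ((N+1).factorial : ℝ) := by exact_mod_cast (N+1).factorial_pos
        rw [Real.rpow_neg hfac.le, Real.rpow_neg hNf.le]
        apply inv_anti₀ (Real.rpow_pos_of_pos hNf _)
        exact Real.rpow_le_rpow hNf.le hle hβ0.le
      -- (1/4)^i ≤ (1/2)^N * (1/2)^i
      have hstep5 : (1/4 : ℝ) ^ i ≤ (1/2 : ℝ) ^ N * (1/2 : ℝ) ^ i := by
        have : (1/4 : ℝ) ^ i = (1/2 : ℝ) ^ i * (1/2 : ℝ) ^ i := by
          rw [← mul_pow]; norm_num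
        rw [this]
        apply mul_le_mul_of_nonneg_right _ (by positivity)
        exact pow_le_pow_of_le_one (by norm_num) (by norm_num) hi.le
      calc |iteratedDeriv i y t| / ((2 * i).factorial : ℝ)
          ≤ M₁ * (i.factorial : ℝ) ^ (s - 2) * (1/R₁) ^ i := hstep1.trans hstep2
        _ = M₁ * (i.factorial : ℝ) ^ (-β) * ((i.factorial : ℝ) ^ (-δ) * (1/R₁) ^ i) := by
            rw [hsplit]; ring
        _ ≤ M₁ * (i.factorial : ℝ) ^ (-β) * (A * (1/4:ℝ) ^ i) := by
            apply mul_le_mul_of_nonneg_left hstep3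
            have := Real.rpow_nonneg hfac.le (-β)
            positivity
        _ ≤ M₁ * ((N+1).factorial : ℝ) ^ (-β) * (A * (1/4:ℝ) ^ i) := by
            apply mul_le_mul_of_nonneg_right _ (by positivity)
            exact mul_le_mul_of_nonneg_left hstep4 hM.le
        _ ≤ M₁ * ((N+1).factorial : ℝ) ^ (-β) * (A * ((1/2:ℝ) ^ N * (1/2:ℝ) ^ i)) := by
            apply mul_le_mul_of_nonneg_left
            · exact mul_le_mul_of_nonneg_left hstep5 hA0.le
            · have : (0:ℝ) ≤ ((N+1).factorial : ℝ) ^ (-β) :=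
                Real.rpow_nonneg (by positivity) _
              positivity
        _ = D * (1/2 : ℝ) ^ i := by rw [hDdef]; ring
    · simp only [hi, if_false]
      positivity
  have hsumg : Summable (fun i : ℕ => D * (1/2 : ℝ) ^ i) :=
    (summable_geometric_of_lt_one (by norm_num) (by norm_num)).mul_left D
  have hsumf : Summable (fun i : ℕ =>
      if N < i then |iteratedDeriv i y t| / ((2 * i).factorial : ℝ) else 0) := by
    apply Summable.of_nonneg_of_le _ key hsumg
    intro i
    by_cases hi : N < i
    · simp only [hi, if_true]; positivity
    · simp [hi]
  have htsum : (∑' i : ℕ, if N < i then |iteratedDeriv i y t| / ((2 * i).factorial : ℝ) else 0)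
      ≤ 2 * D := by
    calc (∑' i : ℕ, if N < i then |iteratedDeriv i y t| / ((2 * i).factorial : ℝ) else 0)
        ≤ ∑' i : ℕ, D * (1/2 : ℝ) ^ i := Summable.tsum_le_tsum key hsumf hsumg
      _ = D * (1 - 1/2)⁻¹ := by
          rw [tsum_mul_left, tsum_geometric_of_lt_one (by norm_num) (by norm_num)]
      _ = 2 * D := by norm_num [mul_comm]
  refine htsum.trans ?_
  -- final : 2 * D ≤ K * exp(-C₁ N log N)
  have hN0 : (0:ℝ) < N := by exact_mod_cast (by omega : 0 < N)
  have hlogN : 0 ≤ Real.log N := Real.log_nonneg (by exact_mod_cast (by omega : 1 ≤ N))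
  have hNfacpos : (0:ℝ) < (N.factorial : ℝ) := by exact_mod_cast N.factorial_pos
  -- (N!)^(-β) ≤ exp (β N - β N log N)
  have hlogfac : (N:ℝ) * Real.log N - N ≤ Real.log (N.factorial : ℝ) := by
    have h := Real.pow_div_factorial_le_exp (N:ℝ) hN0.le N
    rw [div_le_iff₀ hNfacpos] at h
    have hlog := Real.log_le_log (by positivity) h
    rw [Real.log_pow, Real.log_mul (Real.exp_pos _).ne' hNfacpos.ne', Real.log_exp] at hlog
    linarith
  have hfacbound : ((N+1).factorial : ℝ) ^ (-β) ≤ Real.exp (β * N - β * (N * Real.log N)) := by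
    have h1 : (N.factorial : ℝ) ≤ ((N+1).factorial : ℝ) := by
      exact_mod_cast Nat.factorial_le (by omega)
    have hN1f : (0:ℝ) < ((N+1).factorial : ℝ) := by exact_mod_cast (N+1).factorial_pos
    calc ((N+1).factorial : ℝ) ^ (-β)
        ≤ (N.factorial : ℝ) ^ (-β) := by
          rw [Real.rpow_neg hNfacpos.le, Real.rpow_neg hN1f.le]
          apply inv_anti₀ (Real.rpow_pos_of_pos hNfacpos _)
          exact Real.rpow_le_rpow hNfacpos.le h1 hβ0.le
      _ = Real.exp (-β * Real.log (N.factorial : ℝ)) := by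
          rw [Real.rpow_def_of_pos hNfacpos]; ring_nf
      _ ≤ Real.exp (β * N - β * (N * Real.log N)) := by
          apply Real.exp_le_exp.mpr
          nlinarith [hlogfac, hβ0]
  -- β N - γ N log N ≤ B
  have hcore : β * N - γ * (N * Real.log N) ≤ B := by
    by_cases hcase : β ≤ γ * Real.log N
    · have h1 : β * N ≤ γ * Real.log N * N := by
        apply mul_le_mul_of_nonneg_right hcase hN0.le
      have hB0 : 0 ≤ B := by
        rw [hBdef]; positivity
      nlinarith
    · push_neg at hcase
      have hlt : Real.log N < β / γ := by
        rw [lt_div_iff₀ hγ0]; linarith [hcase]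
      have hNlt : (N:ℝ) ≤ Real.exp (β/γ) := by
        calc (N:ℝ) = Real.exp (Real.log N) := (Real.exp_log hN0).symm
          _ ≤ Real.exp (β/γ) := Real.exp_le_exp.mpr hlt.le
      have h2 : 0 ≤ γ * (N * Real.log N) := by positivity
      have h3 : β * N ≤ β * Real.exp (β/γ) := mul_le_mul_of_nonneg_left hNlt hβ0.le
      rw [hBdef]; linarith
  have hhalf : (1/2 : ℝ) ^ N ≤ 1 := pow_le_one₀ (by norm_num) (by norm_num)
  calc 2 * D = 2 * M₁ * A * (((N+1).factorial : ℝ) ^ (-β) * (1/2:ℝ) ^ N) := by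
        rw [hDdef]; ring
    _ ≤ 2 * M₁ * A * (Real.exp (β * N - β * (N * Real.log N)) * 1) := by
        apply mul_le_mul_of_nonneg_left _ (by positivity)
        apply mul_le_mul hfacbound hhalf (by positivity)
          (Real.exp_pos _).le
    _ = 2 * M₁ * A * Real.exp (β * N - β * (N * Real.log N)) := by ring
    _ ≤ 2 * M₁ * A * Real.exp (B + (-C₁ * N * Real.log N)) := by
        apply mul_le_mul_of_nonneg_left _ (by positivity)
        apply Real.exp_le_exp.mpr
        have heq : B + (-C₁ * N * Real.log N) - (β * N - β * (N * Real.log N))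
            = B - (β * N - γ * (N * Real.log N)) := by rw [hγdef]; ring
        linarith [hcore, heq]
    _ = 2 * M₁ * A * Real.exp B * Real.exp (-C₁ * N * Real.log N) := by
        rw [Real.exp_add]; ring
end
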